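/- arXiv:2510.27523 — 3 statements merged into one kernel-verified Lean document; each statement's English description precedes it below -/
import Mathlib

section
/- Let X be a δ_X-hyperbolic geodesic metric space and Y a δ_Y-hyperbolic geodesic metric space (δ_X, δ_Y ≥ 0), and let Ψ : X → Y be a (c₁, c₂, d₀)-rough quasi-isometric mapping with c₂ ≥ c₁ > 0 and d₀ ≥ 0. Then there exists a constant d depending only on c₁, c₂, d₀, δ_X, δ_Y such that Ψ is strongly (c₁, c₂, d)-power quasi-isometric. -/
/-- Gromov product of `x` and `y` based at `o`. -/
noncomputable def gromovProd {X : Type*} [MetricSpace X] (o x y : X) : ℝ :=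
  (dist x o + dist y o - dist x y) / 2

/-- `X` is δ-hyperbolic: `(x|y)_o ≥ min{(x|z)_o, (z|y)_o} − δ` for all points. -/
def IsDeltaHyperbolic (X : Type*) [MetricSpace X] (δ : ℝ) : Prop :=
  ∀ o x y z : X, min (gromovProd o x z) (gromovProd o z y) - δ ≤ gromovProd o x y

/-- `X` is a geodesic metric space: any two points are joined by an isometric image
of the interval `[0, dist x y]`. -/
def IsGeodesicSpace (X : Type*) [MetricSpace X] : Prop :=
  ∀ x y : X, ∃ γ : ℝ → X, γ 0 = x ∧ γ (dist x y) = y ∧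
    ∀ s ∈ Set.Icc (0 : ℝ) (dist x y), ∀ t ∈ Set.Icc (0 : ℝ) (dist x y),
      dist (γ s) (γ t) = |s - t|

/-- The cross-difference `⟨x, y, z, u⟩ = (x|y)_o + (z|u)_o − (x|z)_o − (y|u)_o`,
written in its basepoint-free closed form. -/
noncomputable def crossDiff {X : Type*} [MetricSpace X] (x y z u : X) : ℝ :=
  (dist x z + dist y u - dist x y - dist z u) / 2

/-- `f : X → Y` is an `(a₁, a₂, k)`-rough quasi-isometric mapping. -/
def IsRoughQI {X Y : Type*} [MetricSpace X] [MetricSpace Y]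
    (a₁ a₂ k : ℝ) (f : X → Y) : Prop :=
  (∀ x z : X, a₁ * dist x z - k ≤ dist (f x) (f z) ∧ dist (f x) (f z) ≤ a₂ * dist x z + k)
  ∧ ∀ y : Y, ∃ x : X, dist (f x) y ≤ k

namespace RQIProof

open Set Real

section Basic

variable {Z : Type*} [MetricSpace Z]

lemma gp_nonneg (o x y : Z) : 0 ≤ gromovProd o x y := by
  have h := dist_triangle x o y
  have h2 : dist o y = dist y o := dist_comm o y
  unfold gromovProd; linarith

lemma gp_sym (o x y : Z) : gromovProd o x y = gromovProd o y x := by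
  unfold gromovProd; rw [dist_comm x y]; ring

lemma gp_base (o o' x y : Z) : gromovProd o x y ≤ gromovProd o' x y + dist o o' := by
  have h1 := dist_triangle x o' o
  have h2 := dist_triangle y o' o
  have h3 : dist o' o = dist o o' := dist_comm _ _
  unfold gromovProd; linarith

lemma gp_between_eq_zero (m x y : Z) (h : dist x m + dist m y = dist x y) :
    gromovProd m x y = 0 := by
  have h2 : dist y m = dist m y := dist_comm _ _
  unfold gromovProd; linarith

lemma gp_between (o m x y : Z) (h : dist x m + dist m y = dist x y) :
    gromovProd o x y ≤ dist o m := by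
  have h1 := gp_base o m x y
  have h2 := gp_between_eq_zero m x y h
  linarith

lemma crossDiff_gp (o x y z u : Z) :
    crossDiff x y z u
      = gromovProd o x y + gromovProd o z u - gromovProd o x z - gromovProd o y u := by
  unfold crossDiff gromovProd; ring

/-- Projection onto a geodesic: there is a point `γ t` on a geodesic from `u` to `v`
within `(u|v)_w + 2δ` of `w`, satisfying some auxiliary Gromov product bounds. -/
lemma exists_proj (δ : ℝ) (hδ : 0 ≤ δ) (hhyp : IsDeltaHyperbolic Z δ)
    (hgeo : IsGeodesicSpace Z) (u v w : Z) :
    ∃ (γ : ℝ → Z) (t : ℝ), γ 0 = u ∧ γ (dist u v) = v ∧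
      (∀ s ∈ Icc (0:ℝ) (dist u v), ∀ s' ∈ Icc (0:ℝ) (dist u v),
        dist (γ s) (γ s') = |s - s'|) ∧
      t ∈ Icc (0:ℝ) (dist u v) ∧
      dist u (γ t) + dist (γ t) v = dist u v ∧
      dist w (γ t) ≤ gromovProd w u v + 2*δ ∧
      gromovProd (γ t) u w ≤ δ ∧ gromovProd (γ t) v w ≤ δ := by
  obtain ⟨γ, h0, h1, hiso⟩ := hgeo u v
  set t := gromovProd u v w with htdef
  have htnn : 0 ≤ t := gp_nonneg u v w
  have htle : t ≤ dist u v := by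
    have h := dist_triangle w v u
    have e1 : dist w u = dist u w := dist_comm _ _
    have e2 : dist v u = dist u v := dist_comm _ _
    have e3 : dist w v = dist v w := dist_comm _ _
    unfold gromovProd at htdef
    rw [htdef]; linarith
  have htmem : t ∈ Icc (0:ℝ) (dist u v) := ⟨htnn, htle⟩
  have h0mem : (0:ℝ) ∈ Icc (0:ℝ) (dist u v) := ⟨le_refl _, dist_nonneg⟩
  have hDmem : dist u v ∈ Icc (0:ℝ) (dist u v) := ⟨dist_nonneg, le_refl _⟩
  have hup : dist u (γ t) = t := by
    have h := hiso 0 h0mem t htmem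
    rw [h0] at h
    rw [h, abs_of_nonpos (by linarith : (0:ℝ) - t ≤ 0)]
    ring
  have hpv : dist (γ t) v = dist u v - t := by
    have h := hiso t htmem (dist u v) hDmem
    rw [h1] at h
    rw [h, abs_of_nonpos (by linarith : t - dist u v ≤ 0)]
    ring
  have hbtw : dist u (γ t) + dist (γ t) v = dist u v := by rw [hup, hpv]; ring
  -- the two Gromov products at w are equal
  set p := γ t with hp
  have hgp1 : gromovProd w u p = dist p w / 2 + gromovProd w u v / 2 := by
    have e1 : dist u w = dist w u := dist_comm _ _
    have e2 : dist u p = dist p u := dist_comm _ _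
    have e3 : dist v w = dist w v := dist_comm _ _
    have e4 : dist v u = dist u v := dist_comm _ _
    unfold gromovProd at htdef ⊢
    rw [htdef] at hup
    linarith [hup]
  have hgp2 : gromovProd w p v = dist p w / 2 + gromovProd w u v / 2 := by
    have e1 : dist u w = dist w u := dist_comm _ _
    have e3 : dist v w = dist w v := dist_comm _ _
    have e4 : dist v u = dist u v := dist_comm _ _
    unfold gromovProd at htdef ⊢
    rw [htdef] at hpv
    linarith [hpv]
  have hhh := hhyp w u v p
  rw [hgp1, hgp2, min_self] at hhh
  have hwp : dist w p ≤ gromovProd w u v + 2*δ := by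
    have e : dist w p = dist p w := dist_comm _ _
    linarith
  have hgpu : gromovProd p u w ≤ δ := by
    have e1 : dist u p = dist p u := dist_comm _ _
    have e2 : dist w p = dist p w := dist_comm _ _
    have e3 : dist u w = dist w u := dist_comm _ _
    have e4 : dist v u = dist u v := dist_comm _ _
    have e5 : dist v w = dist w v := dist_comm _ _
    unfold gromovProd at htdef hwp ⊢
    rw [htdef] at hup
    linarith [hup, hwp]
  have hgpv : gromovProd p v w ≤ δ := by
    have e1 : dist v p = dist p v := dist_comm _ _
    have e2 : dist w p = dist p w := dist_comm _ _
    have e3 : dist u w = dist w u := dist_comm _ _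
    have e4 : dist v u = dist u v := dist_comm _ _
    have e5 : dist v w = dist w v := dist_comm _ _
    unfold gromovProd at htdef hwp ⊢
    linarith [hpv, hwp]
  exact ⟨γ, t, h0, h1, hiso, htmem, hbtw, hwp, hgpu, hgpv⟩

/-- Dyadic chain lemma. -/
lemma chain_lemma (δ : ℝ) (hδ : 0 ≤ δ) (hhyp : IsDeltaHyperbolic Z δ)
    (w : Z) (c : ℕ → Z) (B : ℝ) :
    ∀ k i j : ℕ, i < j → j ≤ i + 2^k →
      (∀ l, i ≤ l → l < j → B ≤ gromovProd w (c l) (c (l+1))) →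
      B - δ * k ≤ gromovProd w (c i) (c j) := by
  intro k
  induction k with
  | zero =>
    intro i j h1 h2 h3
    have hj : j = i + 1 := by omega
    subst hj
    have := h3 i le_rfl (by omega)
    simpa using this
  | succ k ih =>
    intro i j h1 h2 h3
    by_cases hj : j = i + 1
    · subst hj
      have h4 := h3 i le_rfl (by omega)
      have hk : (0:ℝ) ≤ δ * (k+1 : ℕ) := by positivity
      linarith
    · have hpow : (2:ℕ)^(k+1) = 2^k + 2^k := by ring
      have hp : 0 < 2^k := Nat.pow_pos (by norm_num)
      set m := (i + j)/2 with hm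
      have hm1 : i < m := by omega
      have hm2 : m < j := by omega
      have hA := ih i m hm1 (by omega) (fun l hl hl' => h3 l hl (by omega))
      have hB := ih m j hm2 (by omega) (fun l hl hl' => h3 l (by omega) hl')
      have hH := hhyp w (c i) (c j) (c m)
      have hmin : B - δ * k ≤ min (gromovProd w (c i) (c m)) (gromovProd w (c m) (c j)) :=
        le_min hA hB
      have hcast : ((k+1 : ℕ) : ℝ) = (k:ℝ) + 1 := by push_cast; ring
      rw [hcast]
      linarith

/-- The constant from the Morse-type iteration. -/
noncomputable def Mone (c₁ c₂ d₀ δ : ℝ) : ℝ :=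
  (8*δ*Real.sqrt (6/c₁) + Real.sqrt (8*δ*Real.sqrt ((6+d₀)/c₁ + 4) + 4*δ + (c₂+d₀) + 3))^2

/-- The Morse constant: distance from a quasigeodesic point to a geodesic. -/
noncomputable def Mzero (c₁ c₂ d₀ δ : ℝ) : ℝ :=
  c₂ * ((2*(Mone c₁ c₂ d₀ δ) + 1 + d₀)/c₁) + d₀ + Mone c₁ c₂ d₀ δ

lemma Mone_nonneg (c₁ c₂ d₀ δ : ℝ) : 0 ≤ Mone c₁ c₂ d₀ δ := sq_nonneg _

lemma Mzero_nonneg (c₁ c₂ d₀ δ : ℝ) (hc₁ : 0 < c₁) (hc₂ : c₁ ≤ c₂) (hd₀ : 0 ≤ d₀) :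
    0 ≤ Mzero c₁ c₂ d₀ δ := by
  have h1 := Mone_nonneg c₁ c₂ d₀ δ
  have h2 : (0:ℝ) ≤ (2*(Mone c₁ c₂ d₀ δ) + 1 + d₀)/c₁ := by positivity
  have h3 : (0:ℝ) ≤ c₂ := by linarith
  unfold Mzero
  nlinarith

/-- Arithmetic resolution lemma: the fixed-point bound for the Morse iteration. -/
lemma ar_lemma (δ a b h₀ : ℝ) (hδ : 0 ≤ δ) (ha : 0 < a) (hb : 1 ≤ b) (hh : 0 ≤ h₀)
    (V : ℝ)
    (hV : (8*δ*Real.sqrt a + Real.sqrt (8*δ*Real.sqrt b + 4*δ + h₀ + 3))^2 ≤ V) :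
    2*δ*(Real.logb 2 (a*V + b) + 2) + h₀ + 3 ≤ V := by
  set α := 8*δ*Real.sqrt a with hα
  set β := 8*δ*Real.sqrt b + 4*δ + h₀ + 3 with hβ
  have hαnn : 0 ≤ α := by positivity
  have hβnn : 0 ≤ β := by positivity
  have hβ3 : 3 ≤ β := by
    rw [hβ]
    nlinarith [mul_nonneg (mul_nonneg (by norm_num : (0:ℝ) ≤ 8) hδ) (Real.sqrt_nonneg b)]
  have hVnn : 0 ≤ V := le_trans (sq_nonneg _) hV
  set u := Real.sqrt V with hu
  have hunn : 0 ≤ u := Real.sqrt_nonneg _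
  have husq : u^2 = V := Real.sq_sqrt hVnn
  have hularge : α + Real.sqrt β ≤ u := by
    have := Real.sqrt_le_sqrt hV
    rwa [Real.sqrt_sq (by positivity)] at this
  have hx1 : 1 ≤ a*V + b := by nlinarith
  have hxpos : 0 < a*V + b := by linarith
  -- logb 2 x ≤ 2 log x for x ≥ 1
  have hlog2 : (0.6931471803:ℝ) < Real.log 2 := Real.log_two_gt_d9
  have hlognn : 0 ≤ Real.log (a*V+b) := Real.log_nonneg hx1
  have hlogb : Real.logb 2 (a*V + b) ≤ 2 * Real.log (a*V + b) := by
    rw [Real.logb, div_le_iff₀ (by linarith)]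
    nlinarith
  -- log x ≤ 2 sqrt x
  have hsq : Real.log (a*V+b) ≤ 2 * Real.sqrt (a*V+b) := by
    have h1 : Real.log (Real.sqrt (a*V+b)) ≤ Real.sqrt (a*V+b) - 1 :=
      Real.log_le_sub_one_of_pos (Real.sqrt_pos.mpr hxpos)
    have h2 : Real.log (Real.sqrt (a*V+b)) = Real.log (a*V+b) / 2 :=
      Real.log_sqrt (le_of_lt hxpos)
    have h3 : 0 ≤ Real.sqrt (a*V+b) := Real.sqrt_nonneg _
    linarith
  -- sqrt (aV+b) ≤ sqrt a * u + sqrt b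
  have hsplit : Real.sqrt (a*V+b) ≤ Real.sqrt a * u + Real.sqrt b := by
    have h1 : a*V + b ≤ (Real.sqrt a * u + Real.sqrt b)^2 := by
      have e1 : Real.sqrt a ^2 = a := Real.sq_sqrt (le_of_lt ha)
      have e2 : Real.sqrt b ^2 = b := Real.sq_sqrt (by linarith)
      have e3 : 0 ≤ Real.sqrt a := Real.sqrt_nonneg _
      have e4 : 0 ≤ Real.sqrt b := Real.sqrt_nonneg _
      nlinarith [husq, mul_nonneg (mul_nonneg e3 e4) hunn]
    have := Real.sqrt_le_sqrt h1
    rwa [Real.sqrt_sq (by positivity)] at this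
  -- combine: LHS ≤ α u + β ≤ u² = V
  have hfin : α * u + β ≤ V := by
    have h1 : Real.sqrt β ≤ u := by linarith
    have h2 : Real.sqrt β ^ 2 = β := Real.sq_sqrt hβnn
    have k1 : (α + Real.sqrt β) * u ≤ u * u := mul_le_mul_of_nonneg_right hularge hunn
    have k2 : β ≤ Real.sqrt β * u := by nlinarith [Real.sqrt_nonneg β]
    nlinarith [husq]
  have hchain : 2*δ*(Real.logb 2 (a*V + b) + 2) + h₀ + 3 ≤ α * u + β := by
    have h5 : Real.logb 2 (a*V+b) ≤ 4 * (Real.sqrt a * u + Real.sqrt b) := by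
      have h6 : 0 ≤ Real.sqrt (a*V+b) := Real.sqrt_nonneg _
      linarith
    have h7 := mul_le_mul_of_nonneg_left h5 (by linarith : (0:ℝ) ≤ 2*δ)
    have h8 : α*u + β = 2*δ*(4*(Real.sqrt a*u + Real.sqrt b)) + 4*δ + h₀ + 3 := by
      rw [hα, hβ]; ring
    linarith
  linarith

/-- clog bound in terms of real logb. -/
lemma clog_le_logb (n : ℕ) (hn : 1 ≤ n) :
    (Nat.clog 2 n : ℝ) ≤ Real.logb 2 n + 1 := by
  rcases eq_or_lt_of_le hn with h|h
  · rw [← h]; simp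
  · have hn2 : 2 ≤ n := h
    have hlt : ¬ (n ≤ 2 ^ (Nat.clog 2 n - 1)) := by
      intro hcon
      have := (Nat.clog_le_iff_le_pow (by norm_num : 1 < 2)).mpr hcon
      have hpos : 0 < Nat.clog 2 n := Nat.clog_pos (by norm_num) hn2
      omega
    push_neg at hlt
    set m := Nat.clog 2 n - 1 with hmdef
    have hcast : (2:ℝ)^m < (n:ℝ) := by exact_mod_cast hlt
    have h2pos : (0:ℝ) < (2:ℝ)^m := by positivity
    have hnpos : (0:ℝ) < (n:ℝ) := by positivity
    have hlogb : (m : ℝ) ≤ Real.logb 2 n := by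
      have h1 : Real.logb 2 ((2:ℝ)^m) = (m:ℝ) := by
        rw [Real.logb_pow]; simp [Real.logb_self_eq_one]
      rw [← h1]
      exact (Real.logb_le_logb (by norm_num : (1:ℝ) < 2) h2pos hnpos).mpr hcast.le
    have hpos : 0 < Nat.clog 2 n := Nat.clog_pos (by norm_num) hn2
    have hm : (m : ℝ) = (Nat.clog 2 n : ℝ) - 1 := by
      rw [hmdef]; push_cast [Nat.cast_sub hpos]; ring
    linarith

end Basic
section IMP

variable {Y : Type*} [MetricSpace Y]

set_option maxHeartbeats 1000000 in
/-- One improvement step of the Morse iteration. -/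
lemma imp_step (δ : ℝ) (hδ : 0 ≤ δ) (hhyp : IsDeltaHyperbolic Y δ)
    (c₁ c₂ d₀ L : ℝ) (hc₁ : 0 < c₁) (hc₂ : c₁ ≤ c₂) (hd₀ : 0 ≤ d₀) (hL : 0 ≤ L)
    (f : ℝ → Y)
    (hfu : ∀ s ∈ Set.Icc (0:ℝ) L, ∀ t ∈ Set.Icc (0:ℝ) L,
      dist (f s) (f t) ≤ c₂ * |s - t| + d₀)
    (hfl : ∀ s ∈ Set.Icc (0:ℝ) L, ∀ t ∈ Set.Icc (0:ℝ) L,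
      c₁ * |s - t| - d₀ ≤ dist (f s) (f t))
    (D : ℝ) (hD : 0 ≤ D) (γ : ℝ → Y) (hγ0 : γ 0 = f 0) (hγD : γ D = f L)
    (hγiso : ∀ s ∈ Set.Icc (0:ℝ) D, ∀ t ∈ Set.Icc (0:ℝ) D, dist (γ s) (γ t) = |s - t|)
    (R D₁ τ₀ : ℝ) (hR : 0 ≤ R) (hD₁ : 0 ≤ D₁) (hRD : R ≤ D₁ + 1) (hτ : τ₀ ∈ Set.Icc (0:ℝ) D)
    (hHR : ∀ τ ∈ Set.Icc (0:ℝ) D, ∃ σ ∈ Set.Icc (0:ℝ) L, dist (γ τ) (f σ) ≤ R)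
    (hCH : ∀ σ ∈ Set.Icc (0:ℝ) L, D₁ < dist (γ τ₀) (f σ)) :
    ∃ n : ℕ, 1 ≤ n ∧ (n:ℝ) ≤ (6/c₁) * D₁ + ((6+d₀)/c₁ + 4) ∧
      D₁ ≤ δ * (Nat.clog 2 n) + (R + (c₂ + d₀))/2 := by
  obtain ⟨hτ0, hτD⟩ := hτ
  set r := R + D₁ + 1 with hrdef
  have hrpos : 0 < r := by linarith
  set α₁ := max (τ₀ - r) 0 with hα₁def
  set α₂ := min (τ₀ + r) D with hα₂def
  have hα₁mem : α₁ ∈ Set.Icc (0:ℝ) D := ⟨le_max_right _ _, by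
    apply max_le (by linarith) hD⟩
  have hα₂mem : α₂ ∈ Set.Icc (0:ℝ) D := ⟨le_min (by linarith) hD, min_le_right _ _⟩
  have hα₁τ : α₁ ≤ τ₀ := max_le (by linarith) hτ0
  have hτα₂ : τ₀ ≤ α₂ := le_min (by linarith) hτD
  obtain ⟨σ₁, hσ₁mem, hσ₁⟩ := hHR α₁ hα₁mem
  obtain ⟨σ₂, hσ₂mem, hσ₂⟩ := hHR α₂ hα₂mem
  set n'' := max (⌈|σ₂ - σ₁|⌉₊) 1 with hn''def
  have hn''pos : 0 < n'' := lt_of_lt_of_le one_pos (le_max_right _ _)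
  have hn''posR : (0:ℝ) < (n'':ℝ) := by exact_mod_cast hn''pos
  have hn''ge : |σ₂ - σ₁| ≤ (n'':ℝ) := by
    calc |σ₂ - σ₁| ≤ (⌈|σ₂ - σ₁|⌉₊ : ℝ) := Nat.le_ceil _
    _ ≤ (n'' : ℝ) := by exact_mod_cast Nat.le_max_left _ 1
  set θ : ℕ → ℝ := fun i => σ₁ + (σ₂ - σ₁) * i / n'' with hθdef
  have hθ0 : θ 0 = σ₁ := by simp [hθdef]
  have hθn : θ n'' = σ₂ := by
    simp only [hθdef]
    field_simp
    ring
  have hθmem : ∀ i : ℕ, i ≤ n'' → θ i ∈ Set.Icc (0:ℝ) L := by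
    intro i hi
    have h1 : (0:ℝ) ≤ (i:ℝ)/(n'':ℝ) := by positivity
    have h2 : (i:ℝ)/(n'':ℝ) ≤ 1 := by
      rw [div_le_one hn''posR]; exact_mod_cast hi
    obtain ⟨hs1, hs2⟩ := hσ₁mem
    obtain ⟨hs3, hs4⟩ := hσ₂mem
    constructor
    · rcases le_total σ₁ σ₂ with h|h
      · have : θ i = σ₁ + (σ₂ - σ₁) * ((i:ℝ)/(n'':ℝ)) := by rw [hθdef]; ring
        rw [this]; nlinarith
      · have : θ i = σ₁ + (σ₂ - σ₁) * ((i:ℝ)/(n'':ℝ)) := by rw [hθdef]; ring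
        rw [this]; nlinarith
    · rcases le_total σ₁ σ₂ with h|h
      · have : θ i = σ₁ + (σ₂ - σ₁) * ((i:ℝ)/(n'':ℝ)) := by rw [hθdef]; ring
        rw [this]; nlinarith
      · have : θ i = σ₁ + (σ₂ - σ₁) * ((i:ℝ)/(n'':ℝ)) := by rw [hθdef]; ring
        rw [this]; nlinarith
  have hθstep : ∀ i : ℕ, i < n'' → dist (f (θ i)) (f (θ (i+1))) ≤ c₂ + d₀ := by
    intro i hi
    have h1 := hfu (θ i) (hθmem i (le_of_lt hi)) (θ (i+1)) (hθmem (i+1) hi)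
    have h2 : θ i - θ (i+1) = -((σ₂ - σ₁) / n'') := by
      rw [hθdef]; push_cast; field_simp; ring
    have h3 : |θ i - θ (i+1)| ≤ 1 := by
      rw [h2, abs_neg, abs_div, abs_of_pos hn''posR, div_le_one hn''posR]
      exact hn''ge
    have hc₂pos : 0 ≤ c₂ := by linarith
    nlinarith
  -- the chain
  set c : ℕ → Y := fun j => if j = 0 then γ α₁ else
    if j ≤ n'' + 1 then f (θ ((j-1) ⊓ n'')) else γ α₂ with hcdef
  have hc0 : c 0 = γ α₁ := by simp [hcdef]
  have hcN : c (n''+2) = γ α₂ := by simp [hcdef]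
  have hcmid : ∀ j : ℕ, 1 ≤ j → j ≤ n''+1 → c j = f (θ (j-1)) := by
    intro j h1 h2
    have : (j-1) ⊓ n'' = j - 1 := by omega
    simp only [hcdef]
    rw [if_neg (by omega), if_pos h2, this]
  -- all chain points are far from the basepoint
  set w₀ := γ τ₀ with hw₀def
  have hfar : ∀ j : ℕ, j ≤ n''+2 → D₁ ≤ dist w₀ (c j) := by
    intro j hj
    rcases Nat.eq_zero_or_pos j with hj0|hjpos
    · subst hj0
      rw [hc0]
      rcases le_or_gt (τ₀ - r) 0 with h|h
      · have : α₁ = 0 := max_eq_right h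
        rw [this, hγ0]
        exact le_of_lt (hCH 0 ⟨le_refl _, hL⟩)
      · have hα₁eq : α₁ = τ₀ - r := max_eq_left (le_of_lt h)
        have := hγiso τ₀ ⟨hτ0, hτD⟩ α₁ hα₁mem
        rw [hw₀def, this, hα₁eq, abs_of_nonneg (by linarith)]
        linarith
    · by_cases hj2 : j ≤ n'' + 1
      · rw [hcmid j hjpos hj2]
        exact le_of_lt (hCH _ (hθmem (j-1) (by omega)))
      · have : j = n'' + 2 := by omega
        subst this
        rw [hcN]
        rcases le_or_gt D (τ₀ + r) with h|h
        · have : α₂ = D := min_eq_right h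
          rw [this, hγD]
          exact le_of_lt (hCH L ⟨hL, le_refl _⟩)
        · have hα₂eq : α₂ = τ₀ + r := min_eq_left (le_of_lt h)
          have := hγiso τ₀ ⟨hτ0, hτD⟩ α₂ hα₂mem
          rw [hw₀def, this, hα₂eq, abs_of_nonpos (by linarith)]
          linarith
  -- all steps are short
  have hstep : ∀ l : ℕ, l < n''+2 → dist (c l) (c (l+1)) ≤ R + (c₂ + d₀) := by
    intro l hl
    rcases Nat.eq_zero_or_pos l with hl0|hlpos
    · subst hl0
      rw [hc0, hcmid 1 le_rfl (by omega)]
      simp only [Nat.sub_self]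
      rw [hθ0]
      have hc₂pos : 0 ≤ c₂ := by linarith
      calc dist (γ α₁) (f σ₁) ≤ R := hσ₁
        _ ≤ R + (c₂ + d₀) := by linarith
    · by_cases hl2 : l ≤ n''
      · rw [hcmid l hlpos (by omega), hcmid (l+1) (by omega) (by omega)]
        have h1 := hθstep (l-1) (by omega)
        have h2 : l + 1 - 1 = (l-1) + 1 := by omega
        rw [h2]
        linarith
      · have : l = n'' + 1 := by omega
        subst this
        rw [hcmid (n''+1) (by omega) le_rfl, hcN]
        have : n'' + 1 - 1 = n'' := by omega
        rw [this, hθn, dist_comm]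
        linarith
  -- all adjacent Gromov products are at least B
  have hprod : ∀ l : ℕ, 0 ≤ l → l < n''+2 →
      D₁ - (R + (c₂ + d₀))/2 ≤ gromovProd w₀ (c l) (c (l+1)) := by
    intro l _ hl
    have h1 := hfar l (by omega)
    have h2 := hfar (l+1) (by omega)
    have h3 := hstep l hl
    have e1 : dist (c l) w₀ = dist w₀ (c l) := dist_comm _ _
    have e2 : dist (c (l+1)) w₀ = dist w₀ (c (l+1)) := dist_comm _ _
    unfold gromovProd
    rw [e1, e2]
    linarith
  -- the endpoints product is zero
  have hyz : gromovProd w₀ (c 0) (c (n''+2)) = 0 := by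
    rw [hc0, hcN]
    have e1 : dist (γ α₁) w₀ = τ₀ - α₁ := by
      rw [hw₀def, hγiso α₁ hα₁mem τ₀ ⟨hτ0, hτD⟩, abs_of_nonpos (by linarith)]; ring
    have e2 : dist (γ α₂) w₀ = α₂ - τ₀ := by
      rw [hw₀def, hγiso α₂ hα₂mem τ₀ ⟨hτ0, hτD⟩, abs_of_nonneg (by linarith)]
    have e3 : dist (γ α₁) (γ α₂) = α₂ - α₁ := by
      rw [hγiso α₁ hα₁mem α₂ hα₂mem, abs_of_nonpos (by linarith)]; ring
    unfold gromovProd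
    rw [e1, e2, e3]; ring
  -- apply the chain lemma
  have hchain := chain_lemma δ hδ hhyp w₀ c (D₁ - (R + (c₂ + d₀))/2) (Nat.clog 2 (n''+2)) 0 (n''+2)
    (by omega) (by simpa using Nat.le_pow_clog (by norm_num) (n''+2)) hprod
  rw [hyz] at hchain
  refine ⟨n''+2, by omega, ?_, by linarith⟩
  -- size bound
  have hb1 : (n'' : ℝ) ≤ |σ₂ - σ₁| + 2 := by
    have h1 : n'' ≤ ⌈|σ₂ - σ₁|⌉₊ + 1 := by omega
    have h2 : ((⌈|σ₂ - σ₁|⌉₊ : ℕ) : ℝ) < |σ₂ - σ₁| + 1 := Nat.ceil_lt_add_one (abs_nonneg _)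
    have h3 : ((n'' : ℕ):ℝ) ≤ ((⌈|σ₂ - σ₁|⌉₊ + 1 : ℕ) : ℝ) := by exact_mod_cast h1
    push_cast at h3
    linarith
  have hb2 : c₁ * |σ₁ - σ₂| - d₀ ≤ dist (f σ₁) (f σ₂) := hfl σ₁ hσ₁mem σ₂ hσ₂mem
  have hb3 : dist (f σ₁) (f σ₂) ≤ R + (α₂ - α₁) + R := by
    have t1 := dist_triangle (f σ₁) (γ α₁) (f σ₂)
    have t2 := dist_triangle (γ α₁) (γ α₂) (f σ₂)
    have e3 : dist (γ α₁) (γ α₂) = α₂ - α₁ := by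
      rw [hγiso α₁ hα₁mem α₂ hα₂mem, abs_of_nonpos (by linarith)]; ring
    have e4 : dist (f σ₁) (γ α₁) = dist (γ α₁) (f σ₁) := dist_comm _ _
    have e5 : dist (γ α₂) (f σ₂) ≤ R := hσ₂
    linarith
  have hb4 : α₂ - α₁ ≤ 2*r := by
    have h1 : τ₀ - r ≤ α₁ := le_max_left _ _
    have h2 : α₂ ≤ τ₀ + r := min_le_left _ _
    linarith
  have hb5 : |σ₁ - σ₂| ≤ (6*D₁ + 6 + d₀)/c₁ := by
    rw [le_div_iff₀ hc₁]
    nlinarith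
  have hb6 : |σ₂ - σ₁| = |σ₁ - σ₂| := abs_sub_comm _ _
  have : ((n''+2 : ℕ) : ℝ) ≤ (6*D₁ + 6 + d₀)/c₁ + 4 := by
    push_cast
    linarith
  calc ((n''+2 : ℕ) : ℝ) ≤ (6*D₁ + 6 + d₀)/c₁ + 4 := this
    _ = (6/c₁) * D₁ + ((6+d₀)/c₁ + 4) := by field_simp; ring

set_option maxHeartbeats 1000000 in
/-- Every point of the geodesic is within `Mone` of the quasigeodesic image. -/
lemma claim1 (δ : ℝ) (hδ : 0 ≤ δ) (hhyp : IsDeltaHyperbolic Y δ)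
    (c₁ c₂ d₀ L : ℝ) (hc₁ : 0 < c₁) (hc₂ : c₁ ≤ c₂) (hd₀ : 0 ≤ d₀) (hL : 0 ≤ L)
    (f : ℝ → Y)
    (hfu : ∀ s ∈ Set.Icc (0:ℝ) L, ∀ t ∈ Set.Icc (0:ℝ) L,
      dist (f s) (f t) ≤ c₂ * |s - t| + d₀)
    (hfl : ∀ s ∈ Set.Icc (0:ℝ) L, ∀ t ∈ Set.Icc (0:ℝ) L,
      c₁ * |s - t| - d₀ ≤ dist (f s) (f t))
    (D : ℝ) (hD : 0 ≤ D) (γ : ℝ → Y) (hγ0 : γ 0 = f 0) (hγD : γ D = f L)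
    (hγiso : ∀ s ∈ Set.Icc (0:ℝ) D, ∀ t ∈ Set.Icc (0:ℝ) D, dist (γ s) (γ t) = |s - t|)
    (hDle : D ≤ c₂ * L + d₀) :
    ∀ τ ∈ Set.Icc (0:ℝ) D, ∃ σ ∈ Set.Icc (0:ℝ) L, dist (γ τ) (f σ) ≤ Mone c₁ c₂ d₀ δ := by
  set M₁ := Mone c₁ c₂ d₀ δ with hM₁def
  have hM₁nn : 0 ≤ M₁ := Mone_nonneg _ _ _ _
  have key : ∀ n : ℕ, ∀ τ ∈ Set.Icc (0:ℝ) D, ∃ σ ∈ Set.Icc (0:ℝ) L,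
      dist (γ τ) (f σ) ≤ max M₁ (c₂ * L + d₀ - n) := by
    intro n
    induction n with
    | zero =>
      intro τ hτ
      refine ⟨0, ⟨le_refl _, hL⟩, ?_⟩
      have h1 : dist (γ τ) (γ 0) = |τ - 0| := hγiso τ hτ 0 ⟨le_refl _, hD⟩
      rw [hγ0] at h1
      rw [h1, abs_of_nonneg (by linarith [hτ.1] : (0:ℝ) ≤ τ - 0)]
      push_cast
      have := hτ.2
      refine le_trans ?_ (le_max_right _ _)
      linarith
    | succ n ih =>
      intro τ₀ hτ₀
      by_contra hcon
      push_neg at hcon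
      -- hcon : ∀ σ ∈ Icc 0 L, max M₁ (c₂L + d₀ - (n+1)) < dist (γ τ₀) (f σ)
      set D₁ := max M₁ (c₂ * L + d₀ - (n+1:ℕ)) with hD₁def
      set R := max M₁ (c₂ * L + d₀ - n) with hRdef
      have hD₁nn : 0 ≤ D₁ := le_trans hM₁nn (le_max_left _ _)
      have hRnn : 0 ≤ R := le_trans hM₁nn (le_max_left _ _)
      have hRD : R ≤ D₁ + 1 := by
        rw [hRdef, hD₁def]
        apply max_le
        · exact le_add_of_le_of_nonneg (le_max_left _ _) one_pos.le
        · push_cast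
          refine le_trans ?_ (add_le_add_left (le_max_right _ _) 1)
          push_cast
          linarith
      have hCH : ∀ σ ∈ Set.Icc (0:ℝ) L, D₁ < dist (γ τ₀) (f σ) := fun σ hσ => hcon σ hσ
      obtain ⟨n', hn'1, hn'2, hn'3⟩ := imp_step δ hδ hhyp c₁ c₂ d₀ L hc₁ hc₂ hd₀ hL
        f hfu hfl D hD γ hγ0 hγD hγiso R D₁ τ₀ hRnn hD₁nn hRD hτ₀ ih hCH
      -- derive the contradiction
      have ha : (0:ℝ) < 6/c₁ := by positivity
      have hb : (1:ℝ) ≤ (6+d₀)/c₁ + 4 := by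
        have : (0:ℝ) ≤ (6+d₀)/c₁ := by positivity
        linarith
      have hK : (Nat.clog 2 n' : ℝ) ≤ Real.logb 2 ((6/c₁) * D₁ + ((6+d₀)/c₁ + 4)) + 1 := by
        refine le_trans (clog_le_logb n' hn'1) ?_
        have h2 : (0:ℝ) < (n':ℝ) := by exact_mod_cast hn'1
        have := (Real.logb_le_logb (by norm_num : (1:ℝ) < 2) h2 (by linarith)).mpr hn'2
        linarith
      have hD₁M : Mone c₁ c₂ d₀ δ ≤ D₁ := le_max_left _ _
      have hAR := ar_lemma δ (6/c₁) ((6+d₀)/c₁ + 4) (c₂ + d₀) hδ ha hb (by linarith) D₁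
        (by exact hD₁M)
      have h1 : D₁ ≤ δ * (Real.logb 2 ((6/c₁)*D₁+((6+d₀)/c₁ + 4)) + 1) + (R + (c₂+d₀))/2 := by
        have := mul_le_mul_of_nonneg_left hK hδ
        linarith
      linarith
  intro τ hτ
  obtain ⟨σ, hσmem, hσ⟩ := key (⌈c₂ * L + d₀⌉₊) τ hτ
  refine ⟨σ, hσmem, le_trans hσ ?_⟩
  apply max_le (le_refl _)
  have := Nat.le_ceil (c₂ * L + d₀)
  linarith [hM₁nn]

set_option maxHeartbeats 1000000 in
/-- Quasi-geodesic stability: the Gromov product of the endpoints of a quasigeodesic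
at any point of the quasigeodesic is bounded. -/
lemma qp_core (δ : ℝ) (hδ : 0 ≤ δ) (hhyp : IsDeltaHyperbolic Y δ)
    (hgeo : IsGeodesicSpace Y)
    (c₁ c₂ d₀ L : ℝ) (hc₁ : 0 < c₁) (hc₂ : c₁ ≤ c₂) (hd₀ : 0 ≤ d₀) (hL : 0 ≤ L)
    (f : ℝ → Y)
    (hfu : ∀ s ∈ Set.Icc (0:ℝ) L, ∀ t ∈ Set.Icc (0:ℝ) L,
      dist (f s) (f t) ≤ c₂ * |s - t| + d₀)
    (hfl : ∀ s ∈ Set.Icc (0:ℝ) L, ∀ t ∈ Set.Icc (0:ℝ) L,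
      c₁ * |s - t| - d₀ ≤ dist (f s) (f t)) :
    ∀ s ∈ Set.Icc (0:ℝ) L, gromovProd (f s) (f 0) (f L) ≤ Mzero c₁ c₂ d₀ δ := by
  classical
  obtain ⟨γ, hγ0, hγD, hγiso⟩ := hgeo (f 0) (f L)
  set D := dist (f 0) (f L) with hDdef
  have hD : 0 ≤ D := dist_nonneg
  have hDle : D ≤ c₂ * L + d₀ := by
    have := hfu 0 ⟨le_refl _, hL⟩ L ⟨hL, le_refl _⟩
    rw [abs_of_nonpos (by linarith : (0:ℝ) - L ≤ 0)] at this
    simpa using this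
  have hcl1 := claim1 δ hδ hhyp c₁ c₂ d₀ L hc₁ hc₂ hd₀ hL f hfu hfl D hD γ hγ0 hγD hγiso hDle
  set M₁ := Mone c₁ c₂ d₀ δ with hM₁def
  have hM₁nn : 0 ≤ M₁ := Mone_nonneg _ _ _ _
  set W₁ := (2*M₁ + 1 + d₀)/c₁ with hW₁def
  have hW₁nn : 0 ≤ W₁ := by positivity
  intro s hs
  -- the discretization of the geodesic
  set m := max (⌈D⌉₊) 1 with hmdef
  have hmpos : 0 < m := lt_of_lt_of_le one_pos (le_max_right _ _)
  have hmposR : (0:ℝ) < (m:ℝ) := by exact_mod_cast hmpos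
  have hmD : D ≤ (m:ℝ) := by
    calc D ≤ (⌈D⌉₊:ℝ) := Nat.le_ceil _
    _ ≤ (m:ℝ) := by exact_mod_cast Nat.le_max_left _ 1
  set v : ℕ → ℝ := fun i => D * i / m with hvdef
  have hv0 : v 0 = 0 := by simp [hvdef]
  have hvm : v m = D := by
    simp only [hvdef]; field_simp
  have hvmem : ∀ i : ℕ, i ≤ m → v i ∈ Set.Icc (0:ℝ) D := by
    intro i hi
    have h1 : (0:ℝ) ≤ (i:ℝ) := Nat.cast_nonneg _
    have h2 : (i:ℝ) ≤ (m:ℝ) := by exact_mod_cast hi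
    constructor
    · positivity
    · rw [hvdef]
      rw [div_le_iff₀ hmposR]
      nlinarith
  have hvstep : ∀ i : ℕ, dist (γ (v i)) (γ (v (i+1))) ≤ 1 ∨ True := fun _ => Or.inr trivial
  -- choose witnesses
  have key : ∀ i : ℕ, ∃ σ', σ' ∈ Set.Icc (0:ℝ) L ∧
      (i ≤ m → dist (γ (v i)) (f σ') ≤ M₁) ∧ (i = 0 → σ' = 0) ∧ (m ≤ i → σ' = L) := by
    intro i
    by_cases h0 : i = 0
    · refine ⟨0, ⟨le_refl _, hL⟩, ?_, fun _ => rfl, ?_⟩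
      · intro _
        subst h0
        rw [hv0, hγ0]
        simp [hM₁nn]
      · intro hmi
        subst h0
        omega
    · by_cases hm' : m ≤ i
      · refine ⟨L, ⟨hL, le_refl _⟩, ?_, fun h => absurd h h0, fun _ => rfl⟩
        intro hi
        have : i = m := le_antisymm hi hm'
        subst this
        rw [hvm, hγD]
        simp [hM₁nn]
      · by_cases hi : i ≤ m
        · obtain ⟨σ', hσ'mem, hσ'⟩ := hcl1 (v i) (hvmem i hi)
          exact ⟨σ', hσ'mem, fun _ => hσ', fun h => absurd h h0, fun h => absurd h hm'⟩
        · exact ⟨0, ⟨le_refl _, hL⟩, fun h => absurd h hi, fun h => absurd h h0,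
            fun h => absurd h (by omega)⟩
  choose σ hσmem hσdist hσ0 hσL using key
  -- jumps are bounded
  have hjump : ∀ i : ℕ, i < m → |σ (i+1) - σ i| ≤ W₁ := by
    intro i hi
    have h1 := hσdist i (le_of_lt hi)
    have h2 := hσdist (i+1) hi
    have h3 : dist (γ (v i)) (γ (v (i+1))) ≤ 1 := by
      rw [hγiso (v i) (hvmem i (le_of_lt hi)) (v (i+1)) (hvmem (i+1) hi)]
      have e : v i - v (i+1) = -(D/m) := by
        simp only [hvdef]; push_cast; field_simp; ring
      rw [e, abs_neg, abs_of_nonneg (by positivity)]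
      rw [div_le_one hmposR]
      exact hmD
    have h4 : dist (f (σ i)) (f (σ (i+1))) ≤ 2*M₁ + 1 := by
      have t1 := dist_triangle (f (σ i)) (γ (v i)) (f (σ (i+1)))
      have t2 := dist_triangle (γ (v i)) (γ (v (i+1))) (f (σ (i+1)))
      have e1 : dist (f (σ i)) (γ (v i)) = dist (γ (v i)) (f (σ i)) := dist_comm _ _
      linarith
    have h5 := hfl (σ (i+1)) (hσmem (i+1)) (σ i) (hσmem i)
    have h6 : dist (f (σ (i+1))) (f (σ i)) = dist (f (σ i)) (f (σ (i+1))) := dist_comm _ _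
    rw [hW₁def, le_div_iff₀ hc₁]
    nlinarith [abs_sub_comm (σ (i+1)) (σ i)]
  -- find the crossing index
  have hex : ∃ i : ℕ, s ≤ σ i := ⟨m, by rw [hσL m le_rfl]; exact hs.2⟩
  set i₀ := Nat.find hex with hi₀def
  have hi₀spec : s ≤ σ i₀ := Nat.find_spec hex
  have hi₀le : i₀ ≤ m := Nat.find_le (by rw [hσL m le_rfl]; exact hs.2)
  -- produce a geodesic point near f s
  have hnear : ∃ j : ℕ, j ≤ m ∧ dist (f s) (γ (v j)) ≤ c₂ * W₁ + d₀ + M₁ := by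
    rcases Nat.eq_zero_or_pos i₀ with h0|hpos
    · refine ⟨0, by omega, ?_⟩
      have hs0 : s = 0 := by
        have h1 : σ i₀ = 0 := by rw [h0] at hi₀spec ⊢; exact hσ0 0 rfl
        have := hi₀spec
        rw [hi₀def] at h1
        rw [h0] at this
        rw [hσ0 0 rfl] at this
        exact le_antisymm this hs.1
      rw [hs0, hv0, hγ0]
      simp
      have : (0:ℝ) ≤ c₂*W₁ := mul_nonneg (by linarith) hW₁nn
      linarith
    · obtain ⟨i, hi⟩ : ∃ i, i₀ = i + 1 := ⟨i₀ - 1, by omega⟩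
      have him : i < m := by omega
      have hprev : ¬ s ≤ σ i := Nat.find_min hex (by omega)
      push_neg at hprev
      have hnext : s ≤ σ (i+1) := by rw [← hi]; exact hi₀spec
      have hss : |s - σ i| ≤ W₁ := by
        have := hjump i him
        rw [abs_le] at this ⊢
        constructor <;> [linarith [this.1, this.2]; linarith [this.1, this.2]]
      refine ⟨i, le_of_lt him, ?_⟩
      have t1 := dist_triangle (f s) (f (σ i)) (γ (v i))
      have h1 := hfu s hs (σ i) (hσmem i)
      have h2 := hσdist i (le_of_lt him)
      have e1 : dist (f (σ i)) (γ (v i)) = dist (γ (v i)) (f (σ i)) := dist_comm _ _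
      have h3 : c₂ * |s - σ i| ≤ c₂ * W₁ := by
        apply mul_le_mul_of_nonneg_left hss (by linarith)
      linarith
  obtain ⟨j, hjm, hj⟩ := hnear
  -- conclude via the between-point bound
  have hbtw : dist (f 0) (γ (v j)) + dist (γ (v j)) (f L) = dist (f 0) (f L) := by
    have hmem := hvmem j hjm
    have e1 : dist (f 0) (γ (v j)) = v j := by
      rw [← hγ0, hγiso 0 ⟨le_refl _, hD⟩ (v j) hmem, abs_of_nonpos (by linarith [hmem.1])]
      ring
    have e2 : dist (γ (v j)) (f L) = D - v j := by
      rw [← hγD, hγiso (v j) hmem D ⟨hD, le_refl _⟩, abs_of_nonpos (by linarith [hmem.2])]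
      ring
    rw [e1, e2, ← hDdef]; ring
  have := gp_between (f s) (γ (v j)) (f 0) (f L) hbtw
  rw [Mzero, ← hM₁def, ← hW₁def]
  linarith

end IMP

end RQIProof

open RQIProof Set

set_option maxHeartbeats 1000000 in
theorem rough_QI_is_strongly_power_quasi_isometric
    {X Y : Type*} [MetricSpace X] [MetricSpace Y]
    (δX δY : ℝ) (hδX : 0 ≤ δX) (hδY : 0 ≤ δY)
    (hXhyp : IsDeltaHyperbolic X δX) (hXgeo : IsGeodesicSpace X)
    (hYhyp : IsDeltaHyperbolic Y δY) (hYgeo : IsGeodesicSpace Y)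
    (c₁ c₂ d₀ : ℝ) (hc₁ : 0 < c₁) (hc₁₂ : c₁ ≤ c₂) (hd₀ : 0 ≤ d₀)
    (Ψ : X → Y) (hΨ : IsRoughQI c₁ c₂ d₀ Ψ) :
    ∃ d : ℝ, 0 ≤ d ∧ ∀ x y z u : X, 0 ≤ crossDiff x y z u →
      c₁ * crossDiff x y z u - d ≤ crossDiff (Ψ x) (Ψ y) (Ψ z) (Ψ u) ∧
      crossDiff (Ψ x) (Ψ y) (Ψ z) (Ψ u) ≤ c₂ * crossDiff x y z u + d := by
  classical
  obtain ⟨hΨd, -⟩ := hΨ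
  have hM₀nn : 0 ≤ Mzero c₁ c₂ d₀ δY := Mzero_nonneg _ _ _ _ hc₁ hc₁₂ hd₀
  have hc₂nn : (0:ℝ) ≤ c₂ := by linarith
  have hcd : (0:ℝ) ≤ c₂ * δX := mul_nonneg hc₂nn hδX
  -- the quasi-geodesic stability statement, applied to images of geodesics
  have hQP : ∀ (x y : X) (γ : ℝ → X) (t : ℝ), γ 0 = x → γ (dist x y) = y →
      (∀ s ∈ Icc (0:ℝ) (dist x y), ∀ s' ∈ Icc (0:ℝ) (dist x y),
        dist (γ s) (γ s') = |s - s'|) →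
      t ∈ Icc (0:ℝ) (dist x y) →
      gromovProd (Ψ (γ t)) (Ψ x) (Ψ y) ≤ Mzero c₁ c₂ d₀ δY := by
    intro x y γ t h0 h1 hiso ht
    have h := qp_core δY hδY hYhyp hYgeo c₁ c₂ d₀ (dist x y) hc₁ hc₁₂ hd₀ dist_nonneg
      (fun s => Ψ (γ s))
      (by
        intro s hs t' ht'
        have h2 := (hΨd (γ s) (γ t')).2
        rw [hiso s hs t' ht'] at h2
        exact h2)
      (by
        intro s hs t' ht'
        have h2 := (hΨd (γ s) (γ t')).1
        rw [hiso s hs t' ht'] at h2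
        exact h2)
      t ht
    simp only [h0, h1] at h
    exact h
  -- transfer of small Gromov products through Ψ
  have hTR : ∀ (p r s' : X) (ε : ℝ), 0 ≤ ε → gromovProd p r s' ≤ ε →
      gromovProd (Ψ p) (Ψ r) (Ψ s') ≤ Mzero c₁ c₂ d₀ δY + c₂ * (ε + 2*δX) + d₀ := by
    intro p r s' ε hε hgp
    obtain ⟨γ, t, h0, h1, hiso, ht, hbtw, hwp, -, -⟩ :=
      exists_proj δX hδX hXhyp hXgeo r s' p
    have h2 : gromovProd (Ψ p) (Ψ r) (Ψ s')
        ≤ gromovProd (Ψ (γ t)) (Ψ r) (Ψ s') + dist (Ψ p) (Ψ (γ t)) := gp_base _ _ _ _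
    have h3 := hQP r s' γ t h0 h1 hiso ht
    have h4 := (hΨd p (γ t)).2
    have h5 : dist p (γ t) ≤ ε + 2*δX := le_trans hwp (by linarith)
    have h6 : c₂ * dist p (γ t) ≤ c₂ * (ε + 2*δX) := mul_le_mul_of_nonneg_left h5 hc₂nn
    linarith
  refine ⟨6 * Mzero c₁ c₂ d₀ δY + 33 * (c₂ * δX) + 6 * d₀, by linarith, ?_⟩
  intro x y z u ht
  -- the special points p and q
  obtain ⟨γ₁, t₁, hγ₁0, hγ₁1, hγ₁iso, ht₁, hbtwp, hzp, hpxz, hpyz⟩ :=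
    exists_proj δX hδX hXhyp hXgeo x y z
  obtain ⟨γ₂, t₂, hγ₂0, hγ₂1, hγ₂iso, ht₂, hbtwq, hpq', hqzp, hqup⟩ :=
    exists_proj δX hδX hXhyp hXgeo z u (γ₁ t₁)
  -- notation
  have hgpxy0 : gromovProd (γ₁ t₁) x y = 0 := gp_between_eq_zero _ _ _ hbtwp
  have hgpzu0 : gromovProd (γ₂ t₂) z u = 0 := gp_between_eq_zero _ _ _ hbtwq
  have hid : crossDiff x y z u = gromovProd (γ₁ t₁) x y + gromovProd (γ₁ t₁) z u
      - gromovProd (γ₁ t₁) x z - gromovProd (γ₁ t₁) y u := crossDiff_gp _ x y z u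
  have hmin : min (gromovProd (γ₁ t₁) y u) (gromovProd (γ₁ t₁) u z) ≤ 2*δX := by
    have h := hXhyp (γ₁ t₁) y z u
    linarith
  have hgpzu_le : gromovProd (γ₁ t₁) z u ≤ dist (γ₁ t₁) (γ₂ t₂) := by
    have h := gp_base (γ₁ t₁) (γ₂ t₂) z u
    linarith
  have hdpq_le : dist (γ₁ t₁) (γ₂ t₂) ≤ crossDiff x y z u + 5*δX := by
    rcases le_total (gromovProd (γ₁ t₁) y u) (gromovProd (γ₁ t₁) u z) with h|h
    · rw [min_eq_left h] at hmin
      have h2 : gromovProd (γ₁ t₁) z u ≤ crossDiff x y z u + 3*δX := by linarith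
      linarith
    · rw [min_eq_right h] at hmin
      have h1 : gromovProd (γ₁ t₁) z u ≤ 2*δX := by
        rw [gp_sym]; exact hmin
      linarith
  have hgpyu : gromovProd (γ₁ t₁) y u ≤ 5*δX := by
    have := gp_nonneg (γ₁ t₁) x z
    linarith
  have htle : crossDiff x y z u ≤ dist (γ₁ t₁) (γ₂ t₂) := by
    have t1 := dist_triangle x (γ₁ t₁) z
    have t2 := dist_triangle (γ₁ t₁) (γ₂ t₂) z
    have t3 := dist_triangle y (γ₁ t₁) u
    have t4 := dist_triangle (γ₁ t₁) (γ₂ t₂) u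
    have e1 : dist (γ₂ t₂) z = dist z (γ₂ t₂) := dist_comm _ _
    have e2 : dist y (γ₁ t₁) = dist (γ₁ t₁) y := dist_comm _ _
    have e3 : dist (γ₂ t₂) u = dist (γ₂ t₂) u := rfl
    unfold crossDiff
    linarith
  -- Y-side estimates
  have hE1 := hTR (γ₁ t₁) x z δX hδX hpxz
  have hE2 := hTR (γ₂ t₂) (γ₁ t₁) z δX hδX (by rw [gp_sym]; exact hqzp)
  have hE3 := hTR (γ₁ t₁) y u (5*δX) (by linarith) hgpyu
  have hE4 := hTR (γ₂ t₂) (γ₁ t₁) u δX hδX (by rw [gp_sym]; exact hqup)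
  have hQ1 := hQP x y γ₁ t₁ hγ₁0 hγ₁1 hγ₁iso ht₁
  have hQ2 := hQP z u γ₂ t₂ hγ₂0 hγ₂1 hγ₂iso ht₂
  have hYu := (hΨd (γ₁ t₁) (γ₂ t₂)).2
  have hYl := (hΨd (γ₁ t₁) (γ₂ t₂)).1
  have hr1 : c₂*(δX + 2*δX) = 3*(c₂*δX) := by ring
  have hr2 : c₂*(5*δX + 2*δX) = 7*(c₂*δX) := by ring
  have hc2dpq : c₂ * dist (γ₁ t₁) (γ₂ t₂) ≤ c₂ * crossDiff x y z u + 5*(c₂*δX) := by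
    have := mul_le_mul_of_nonneg_left hdpq_le hc₂nn
    nlinarith
  have hc1t : c₁ * crossDiff x y z u ≤ c₁ * dist (γ₁ t₁) (γ₂ t₂) :=
    mul_le_mul_of_nonneg_left htle (le_of_lt hc₁)
  -- triangles in Y
  have T1 := dist_triangle (Ψ x) (Ψ (γ₁ t₁)) (Ψ z)
  have T2 := dist_triangle (Ψ (γ₁ t₁)) (Ψ (γ₂ t₂)) (Ψ z)
  have T3 := dist_triangle (Ψ y) (Ψ (γ₁ t₁)) (Ψ u)
  have T4 := dist_triangle (Ψ (γ₁ t₁)) (Ψ (γ₂ t₂)) (Ψ u)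
  have T5 := dist_triangle (Ψ x) (Ψ (γ₁ t₁)) (Ψ y)
  have T6 := dist_triangle (Ψ z) (Ψ (γ₂ t₂)) (Ψ u)
  -- dist_comm normalizations in Y
  have C1 : dist (Ψ (γ₂ t₂)) (Ψ z) = dist (Ψ z) (Ψ (γ₂ t₂)) := dist_comm _ _
  have C2 : dist (Ψ (γ₂ t₂)) (Ψ u) = dist (Ψ u) (Ψ (γ₂ t₂)) := dist_comm _ _
  have C3 : dist (Ψ (γ₁ t₁)) (Ψ y) = dist (Ψ y) (Ψ (γ₁ t₁)) := dist_comm _ _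
  have C4 : dist (Ψ (γ₁ t₁)) (Ψ z) = dist (Ψ z) (Ψ (γ₁ t₁)) := dist_comm _ _
  have C5 : dist (Ψ (γ₁ t₁)) (Ψ x) = dist (Ψ x) (Ψ (γ₁ t₁)) := dist_comm _ _
  have C6 : dist (Ψ (γ₂ t₂)) (Ψ (γ₁ t₁)) = dist (Ψ (γ₁ t₁)) (Ψ (γ₂ t₂)) := dist_comm _ _
  have C7 : dist (Ψ (γ₁ t₁)) (Ψ u) = dist (Ψ u) (Ψ (γ₁ t₁)) := dist_comm _ _
  constructor
  · -- lower bound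
    unfold gromovProd at hE1 hE2 hE3 hE4
    unfold crossDiff at hc1t ⊢
    linarith
  · -- upper bound
    unfold gromovProd at hQ1 hQ2
    unfold crossDiff at hc2dpq ⊢
    linarith
end

section
/- Let δ ≥ 0, let X be a δ-hyperbolic geodesic metric space, let o ∈ X, and let γ : [0, ∞) → X be a geodesic ray with γ(0) = o. For x ∈ X define (x|ω)_o = inf{ liminf_i (u_i|x)_o : {u_i} is a sequence converging to infinity that is equivalent to {γ(i)}_{i∈ℕ} }. Then there exists a constant ν depending only on δ such that for all x, y ∈ X: |(x|y)_{b_γ} − ((x|y)_o − (x|ω)_o − (y|ω)_o)| ≤ ν. -/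
open Filter

/-- A sequence converges to infinity: `(u_i|u_j)_o → ∞` as `i, j → ∞`. -/
def ConvToInf {X : Type*} [MetricSpace X] (o : X) (u : ℕ → X) : Prop :=
  Tendsto (fun p : ℕ × ℕ => gromovProd o (u p.1) (u p.2)) atTop atTop

/-- Two sequences are equivalent: `(u_i|v_i)_o → ∞` as `i → ∞`. -/
def SeqEquiv {X : Type*} [MetricSpace X] (o : X) (u v : ℕ → X) : Prop :=
  Tendsto (fun i => gromovProd o (u i) (v i)) atTop atTop

/-- The Busemann function associated to the geodesic ray `γ`:
`b_γ(x) = lim_{t→∞} (d(γ(t), x) − t)`. -/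
noncomputable def busemann {X : Type*} [MetricSpace X] (γ : ℝ → X) (x : X) : ℝ :=
  limUnder atTop (fun t : ℝ => dist (γ t) x - t)

/-- The Gromov product based at the Busemann function `b_γ`. -/
noncomputable def gromovProdBusemann {X : Type*} [MetricSpace X] (γ : ℝ → X) (x y : X) : ℝ :=
  (busemann γ x + busemann γ y - dist x y) / 2

/-- The Gromov product `(x|ω)_o` of a point `x` with the boundary point `ω`
determined by the geodesic ray `γ`: the infimum, over all sequences converging to
infinity which are equivalent to `{γ(i)}_{i∈ℕ}`, of `liminf_i (u_i|x)_o`. -/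
noncomputable def gpOmega {X : Type*} [MetricSpace X] (o : X) (γ : ℝ → X) (x : X) : ℝ :=
  sInf { r : ℝ | ∃ u : ℕ → X, ConvToInf o u ∧ SeqEquiv o u (fun i : ℕ => γ i) ∧
    r = liminf (fun i => gromovProd o (u i) x) atTop }

open Topology in
lemma gromovProd_le_dist' {X : Type*} [MetricSpace X] (o x a : X) :
    gromovProd o a x ≤ dist x o := by
  have h1 : dist a o ≤ dist a x + dist x o := dist_triangle a x o
  unfold gromovProd
  linarith

open Topology in
lemma key_bounds {X : Type*} [MetricSpace X] (δ : ℝ) (hXhyp : IsDeltaHyperbolic X δ)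
    (o : X) (γ : ℝ → X) (hγ0 : γ 0 = o)
    (hray : ∀ s t : ℝ, 0 ≤ s → 0 ≤ t → dist (γ s) (γ t) = |s - t|) (x : X) :
    (dist x o - busemann γ x) / 2 - δ ≤ gpOmega o γ x ∧
      gpOmega o γ x ≤ (dist x o - busemann γ x) / 2 := by
  have dγo : ∀ t : ℝ, 0 ≤ t → dist (γ t) o = t := by
    intro t ht
    rw [← hγ0, hray t 0 ht le_rfl]
    simp [abs_of_nonneg ht]
  set f : ℝ → ℝ := fun t => dist (γ (max t 0)) x - max t 0 with hf
  have hanti : Antitone f := by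
    intro s t hst
    have hs0 : (0:ℝ) ≤ max s 0 := le_max_right _ _
    have ht0 : (0:ℝ) ≤ max t 0 := le_max_right _ _
    have hst' : max s 0 ≤ max t 0 := max_le_max hst le_rfl
    have htri : dist (γ (max t 0)) x ≤ dist (γ (max t 0)) (γ (max s 0)) + dist (γ (max s 0)) x :=
      dist_triangle _ _ _
    have hd : dist (γ (max t 0)) (γ (max s 0)) = max t 0 - max s 0 := by
      rw [hray _ _ ht0 hs0, abs_of_nonneg (by linarith)]
    simp only [hf]
    linarith
  have hbdd : BddBelow (Set.range f) := by
    refine ⟨-dist x o, ?_⟩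
    rintro r ⟨t, rfl⟩
    have ht0 : (0:ℝ) ≤ max t 0 := le_max_right _ _
    have h1 : dist (γ (max t 0)) o ≤ dist (γ (max t 0)) x + dist x o := dist_triangle _ _ _
    rw [dγo _ ht0] at h1
    simp only [hf]
    linarith
  have hftend : Tendsto f atTop (𝓝 (⨅ t, f t)) := tendsto_atTop_ciInf hanti hbdd
  have heq : (fun t : ℝ => dist (γ t) x - t) =ᶠ[atTop] f := by
    filter_upwards [eventually_ge_atTop (0:ℝ)] with t ht
    simp [hf, max_eq_left ht]
  have hBtend : Tendsto (fun t : ℝ => dist (γ t) x - t) atTop (𝓝 (⨅ t, f t)) :=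
    hftend.congr' heq.symm
  have hBeq : busemann γ x = ⨅ t, f t := hBtend.limUnder_eq
  rw [← hBeq] at hBtend
  set B := busemann γ x with hB
  set L : ℝ := (dist x o - B) / 2 with hL
  have hgpt : ∀ t : ℝ, 0 ≤ t → gromovProd o (γ t) x = (dist x o - (dist (γ t) x - t)) / 2 := by
    intro t ht
    unfold gromovProd
    rw [dγo t ht]
    ring
  have hLtend : Tendsto (fun t : ℝ => gromovProd o (γ t) x) atTop (𝓝 L) := by
    have h1 : Tendsto (fun t : ℝ => (dist x o - (dist (γ t) x - t)) / 2) atTop (𝓝 L) := by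
      rw [hL]
      exact (tendsto_const_nhds.sub hBtend).div_const 2
    refine h1.congr' ?_
    filter_upwards [eventually_ge_atTop (0:ℝ)] with t ht
    exact (hgpt t ht).symm
  have hLseq : Tendsto (fun i : ℕ => gromovProd o (γ i) x) atTop (𝓝 L) :=
    hLtend.comp tendsto_natCast_atTop_atTop
  have hgpnat : ∀ i j : ℕ, gromovProd o (γ i) (γ j) = min (i:ℝ) j := by
    intro i j
    unfold gromovProd
    rw [dγo _ (by positivity), dγo _ (by positivity), hray _ _ (by positivity) (by positivity)]
    rcases le_total (i:ℝ) j with h | h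
    · rw [abs_of_nonpos (by linarith), min_eq_left h]; ring
    · rw [abs_of_nonneg (by linarith), min_eq_right h]; ring
  have hγConv : ConvToInf o (fun i : ℕ => γ i) := by
    unfold ConvToInf
    rw [← prod_atTop_atTop_eq, tendsto_atTop]
    intro b
    obtain ⟨n, hn⟩ := exists_nat_ge b
    filter_upwards [Filter.prod_mem_prod (eventually_ge_atTop n) (eventually_ge_atTop n)] with p hp
    rw [hgpnat]
    exact le_min (hn.trans (Nat.cast_le.2 hp.1)) (hn.trans (Nat.cast_le.2 hp.2))
  have hγEquiv : SeqEquiv o (fun i : ℕ => γ i) (fun i : ℕ => γ i) := by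
    unfold SeqEquiv
    refine Tendsto.congr (fun i => ?_) tendsto_natCast_atTop_atTop
    rw [hgpnat, min_self]
  have hmem : L ∈ { r : ℝ | ∃ u : ℕ → X, ConvToInf o u ∧ SeqEquiv o u (fun i : ℕ => γ i) ∧
      r = liminf (fun i => gromovProd o (u i) x) atTop } :=
    ⟨fun i : ℕ => γ i, hγConv, hγEquiv, hLseq.liminf_eq.symm⟩
  have hLB : ∀ r ∈ { r : ℝ | ∃ u : ℕ → X, ConvToInf o u ∧ SeqEquiv o u (fun i : ℕ => γ i) ∧
      r = liminf (fun i => gromovProd o (u i) x) atTop }, L - δ ≤ r := by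
    rintro r ⟨u, hu, huv, rfl⟩
    have hbd : IsBoundedUnder (· ≤ ·) atTop (fun i : ℕ => gromovProd o (u i) x) :=
      isBoundedUnder_of ⟨dist x o, fun i => gromovProd_le_dist' o x (u i)⟩
    refine le_of_forall_pos_le_add ?_
    intro ε hε
    obtain ⟨n, hn⟩ := exists_nat_ge (dist x o + δ)
    obtain ⟨j, hj1, hj2⟩ := ((hLseq.eventually (eventually_gt_nhds
      (show L - ε < L by linarith))).and (eventually_ge_atTop n)).exists
    have hjx : dist x o + δ ≤ (j:ℝ) := hn.trans (Nat.cast_le.2 hj2)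
    have h2 : ∀ᶠ i : ℕ in atTop, dist x o ≤ gromovProd o (u i) (γ j) := by
      filter_upwards [huv.eventually_ge_atTop (j:ℝ), eventually_ge_atTop j] with i hi1 hi2
      have h3 := hXhyp o (u i) (γ j) (γ i)
      have hmineq : min ((i:ℝ)) j = j := min_eq_right (Nat.cast_le.2 hi2)
      rw [hgpnat i j, hmineq] at h3
      have hm : (j:ℝ) ≤ min (gromovProd o (u i) (γ i)) (j:ℝ) := le_min hi1 le_rfl
      linarith
    have h4 : ∀ᶠ i : ℕ in atTop, L - ε - δ ≤ gromovProd o (u i) x := by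
      filter_upwards [h2] with i hi
      have h5 := hXhyp o (u i) x (γ j)
      have h6 : gromovProd o (γ j) x ≤ dist x o := gromovProd_le_dist' o x (γ j)
      have hm : gromovProd o (γ j) x ≤ min (gromovProd o (u i) (γ j)) (gromovProd o (γ j) x) :=
        le_min (h6.trans hi) le_rfl
      linarith
    have h7 := le_liminf_of_le hbd.isCoboundedUnder_ge h4
    linarith
  constructor
  · exact le_csInf ⟨L, hmem⟩ hLB
  · exact csInf_le ⟨L - δ, hLB⟩ hmem

theorem busemann_product_vs_basepoint_product
    {X : Type*} [MetricSpace X] (δ : ℝ) (hδ : 0 ≤ δ)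
    (hXhyp : IsDeltaHyperbolic X δ) (hXgeo : IsGeodesicSpace X)
    (o : X) (γ : ℝ → X) (hγ0 : γ 0 = o)
    (hray : ∀ s t : ℝ, 0 ≤ s → 0 ≤ t → dist (γ s) (γ t) = |s - t|) :
    ∃ ν : ℝ, ∀ x y : X,
      |gromovProdBusemann γ x y -
        (gromovProd o x y - gpOmega o γ x - gpOmega o γ y)| ≤ ν := by
  refine ⟨2 * δ, fun x y => ?_⟩
  obtain ⟨hx1, hx2⟩ := key_bounds δ hXhyp o γ hγ0 hray x
  obtain ⟨hy1, hy2⟩ := key_bounds δ hXhyp o γ hγ0 hray y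
  unfold gromovProdBusemann gromovProd
  rw [abs_le]
  constructor <;> linarith
end

section
/- Let δ ≥ 0, let X be a δ-hyperbolic geodesic metric space, let o ∈ X, let γ : [0, ∞) → X be a geodesic ray with γ(0) = o, let ω denote the equivalence class of {γ(i)}_{i∈ℕ}, and let b = b_γ be the Busemann function associated to γ. Then there exists a constant C₂ ≥ 0 depending only on δ such that for any three pairwise distinct elements x, y, z, each being either a point of X or an equivalence class of sequences converging to infinity that is not equivalent to ω, one has |(x|y)_b − (x|z)_b − ⟨x, y, z, ω⟩| ≤ C₂. Here ⟨x, y, z, ω⟩ = (x|y)_o + (z|ω)_o − (x|z)_o − (y|ω)_o, where Gromov products involving boundary classes (based at o or at b) are the boundary Gromov products. -/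
open Filter

/-- Gromov product based at a real-valued function `c` on `X`
(e.g. `c = dist · o` recovers `(·|·)_o`, and `c = b` a Busemann-based product). -/
noncomputable def gpBase {X : Type*} [MetricSpace X] (c : X → ℝ) (x y : X) : ℝ :=
  (c x + c y - dist x y) / 2

/-- Boundary Gromov product (based at `c`) of the class of the sequence `u` with a
point `y`: infimum over representatives equivalent to `u` of `liminf_i (u'_i|y)_c`. -/
noncomputable def bgpPt {X : Type*} [MetricSpace X] (o : X) (c : X → ℝ) (u : ℕ → X) (y : X) : ℝ :=
  sInf { r : ℝ | ∃ u' : ℕ → X, ConvToInf o u' ∧ SeqEquiv o u u' ∧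
    r = liminf (fun i => gpBase c (u' i) y) atTop }

/-- Boundary Gromov product (based at `c`) of the classes of `u` and `v`. -/
noncomputable def bgpBd {X : Type*} [MetricSpace X] (o : X) (c : X → ℝ) (u v : ℕ → X) : ℝ :=
  sInf { r : ℝ | ∃ u' v' : ℕ → X, ConvToInf o u' ∧ ConvToInf o v' ∧
    SeqEquiv o u u' ∧ SeqEquiv o v v' ∧
    r = liminf (fun i => gpBase c (u' i) (v' i)) atTop }

/-- Gromov product (based at `c`) of two elements of `X ∪ ∂X`, where boundary
points are represented by sequences converging to infinity. -/
noncomputable def gpMixed {X : Type*} [MetricSpace X] (o : X) (c : X → ℝ) :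
    X ⊕ (ℕ → X) → X ⊕ (ℕ → X) → ℝ
  | Sum.inl x, Sum.inl y => gpBase c x y
  | Sum.inl x, Sum.inr v => bgpPt o c v x
  | Sum.inr u, Sum.inl y => bgpPt o c u y
  | Sum.inr u, Sum.inr v => bgpBd o c u v

/-- An element of `X ⊕ (ℕ → X)` is a valid member of `X ∪ ∂_ω X`: a boundary
representative must converge to infinity and must not be equivalent to
the sequence `{γ(i)}` defining `ω`. -/
def ValidElem {X : Type*} [MetricSpace X] (o : X) (γ : ℝ → X) : X ⊕ (ℕ → X) → Prop
  | Sum.inl _ => True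
  | Sum.inr u => ConvToInf o u ∧ ¬ SeqEquiv o u (fun i : ℕ => γ i)

/-- Two elements of `X ∪ ∂X` are distinct: distinct points, non-equivalent boundary
classes, or one point and one boundary class. -/
def DistinctElem {X : Type*} [MetricSpace X] (o : X) : X ⊕ (ℕ → X) → X ⊕ (ℕ → X) → Prop
  | Sum.inl x, Sum.inl y => x ≠ y
  | Sum.inr u, Sum.inr v => ¬ SeqEquiv o u v
  | _, _ => True

section Aux
variable {X : Type*} [MetricSpace X]

lemma gp_comm (o x y : X) : gromovProd o x y = gromovProd o y x := by
  simp [gromovProd, dist_comm]; ring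

lemma gp_nonneg (o x y : X) : 0 ≤ gromovProd o x y := by
  have := dist_triangle x o y
  simp only [gromovProd]
  rw [dist_comm o y] at this
  linarith

lemma gp_le_right (o x y : X) : gromovProd o x y ≤ dist y o := by
  have := dist_triangle x y o
  simp only [gromovProd]
  linarith

lemma gp_le_left (o x y : X) : gromovProd o x y ≤ dist x o := by
  rw [gp_comm]; exact gp_le_right o y x

lemma hyp3 {δ : ℝ} (h : IsDeltaHyperbolic X δ) {o x y z : X} {r : ℝ}
    (h1 : r ≤ gromovProd o x z) (h2 : r ≤ gromovProd o z y) :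
    r - δ ≤ gromovProd o x y := by
  have hm : r ≤ min (gromovProd o x z) (gromovProd o z y) := le_min h1 h2
  linarith [h o x y z]

lemma hyp4 {δ : ℝ} (hδ : 0 ≤ δ) (h : IsDeltaHyperbolic X δ) {o x y z w : X} {r : ℝ}
    (h1 : r ≤ gromovProd o x z) (h2 : r ≤ gromovProd o z w) (h3 : r ≤ gromovProd o w y) :
    r - 2 * δ ≤ gromovProd o x y := by
  have hxw : r - δ ≤ gromovProd o x w := hyp3 h h1 h2
  have := hyp3 h hxw (le_trans (by linarith) h3 : r - δ ≤ gromovProd o w y)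
  linarith

lemma seqEquiv_symm {o : X} {u v : ℕ → X} (h : SeqEquiv o u v) : SeqEquiv o v u := by
  unfold SeqEquiv at *
  refine h.congr (fun i => ?_)
  exact gp_comm o (u i) (v i)

lemma ConvToInf.selfEquiv {o : X} {u : ℕ → X} (h : ConvToInf o u) : SeqEquiv o u u := by
  have := h.comp (tendsto_atTop_diagonal (α := ℕ))
  exact this

lemma convToInf_pairs {o : X} {u : ℕ → X} (h : ConvToInf o u) (R : ℝ) :
    ∃ N, ∀ i ≥ N, ∀ j ≥ N, R ≤ gromovProd o (u i) (u j) := by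
  have := (tendsto_atTop.mp h) R
  rw [eventually_atTop] at this
  obtain ⟨p, hp⟩ := this
  exact ⟨max p.1 p.2, fun i hi j hj => hp (i, j)
    ⟨le_trans (le_max_left _ _) hi, le_trans (le_max_right _ _) hj⟩⟩

lemma tendsto_ev {f : ℕ → ℝ} (h : Tendsto f atTop atTop) (R : ℝ) :
    ∀ᶠ i in atTop, R ≤ f i := (tendsto_atTop.mp h) R

lemma liminf_band {f : ℕ → ℝ} {a b : ℝ} (ha : ∀ᶠ i in atTop, a ≤ f i)
    (hb : ∀ᶠ i in atTop, f i ≤ b) :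
    a ≤ liminf f atTop ∧ liminf f atTop ≤ b := by
  constructor
  · exact le_liminf_of_le (IsBoundedUnder.isCoboundedUnder_ge ⟨b, hb⟩) ha
  · exact liminf_le_of_frequently_le hb.frequently ⟨a, ha⟩

end Aux

/-- The "Gromov product with ω at o" limit function. -/
noncomputable def Fg {X : Type*} [MetricSpace X] (o : X) (γ : ℝ → X) (x : X) : ℝ :=
  ⨆ i : ℕ, gromovProd o x (γ i)

section Gamma
variable {X : Type*} [MetricSpace X] {o : X} {γ : ℝ → X}
  (hγ0 : γ 0 = o)
  (hray : ∀ s t : ℝ, 0 ≤ s → 0 ≤ t → dist (γ s) (γ t) = |s - t|)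

include hγ0 hray

lemma distγ (t : ℝ) (ht : 0 ≤ t) : dist (γ t) o = t := by
  rw [← hγ0, hray t 0 ht le_rfl]
  simp [abs_of_nonneg ht]

lemma gpγγ (s t : ℝ) (hs : 0 ≤ s) (ht : 0 ≤ t) :
    gromovProd o (γ s) (γ t) = min s t := by
  rw [gromovProd, distγ hγ0 hray s hs, distγ hγ0 hray t ht, hray s t hs ht]
  rcases le_total s t with h | h
  · rw [abs_of_nonpos (by linarith), min_eq_left h]; ring
  · rw [abs_of_nonneg (by linarith), min_eq_right h]; ring

lemma gpγ_mono (x : X) {s t : ℝ} (hs : 0 ≤ s) (hst : s ≤ t) :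
    gromovProd o x (γ s) ≤ gromovProd o x (γ t) := by
  have h1 : dist x (γ t) ≤ dist x (γ s) + (t - s) := by
    have := dist_triangle x (γ s) (γ t)
    rw [hray s t hs (by linarith), abs_of_nonpos (by linarith)] at this
    linarith
  simp only [gromovProd, distγ hγ0 hray s hs, distγ hγ0 hray t (le_trans hs hst)]
  linarith

lemma Fg_bddAbove (x : X) : BddAbove (Set.range fun i : ℕ => gromovProd o x (γ i)) := by
  exact ⟨dist x o, by rintro r ⟨i, rfl⟩; exact gp_le_left o x _⟩

lemma le_Fg (x : X) (i : ℕ) : gromovProd o x (γ i) ≤ Fg o γ x :=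
  le_ciSup (Fg_bddAbove hγ0 hray x) i

lemma Fg_nonneg (x : X) : 0 ≤ Fg o γ x :=
  le_trans (gp_nonneg o x (γ (0:ℕ))) (le_Fg hγ0 hray x 0)

lemma Fg_le (x : X) : Fg o γ x ≤ dist x o :=
  ciSup_le fun i => gp_le_left o x _

lemma Fg_tendsto (x : X) :
    Tendsto (fun i : ℕ => gromovProd o x (γ i)) atTop (nhds (Fg o γ x)) := by
  apply tendsto_atTop_ciSup
  · intro i j hij
    exact gpγ_mono hγ0 hray x (by positivity) (by exact_mod_cast hij)
  · exact Fg_bddAbove hγ0 hray x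

lemma Fg_tendsto_real (x : X) :
    Tendsto (fun t : ℝ => gromovProd o x (γ t)) atTop (nhds (Fg o γ x)) := by
  rw [Metric.tendsto_atTop]
  intro ε hε
  have h1 : Fg o γ x - ε < Fg o γ x := by linarith
  obtain ⟨i, hi⟩ := exists_lt_of_lt_ciSup (by exact h1 : Fg o γ x - ε < ⨆ i : ℕ, gromovProd o x (γ i))
  refine ⟨(i : ℝ), fun t ht => ?_⟩
  have ht0 : (0:ℝ) ≤ t := le_trans (Nat.cast_nonneg i) ht
  have hlo : Fg o γ x - ε < gromovProd o x (γ t) :=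
    lt_of_lt_of_le hi (gpγ_mono hγ0 hray x (Nat.cast_nonneg i) ht)
  have hup : gromovProd o x (γ t) ≤ Fg o γ x := by
    calc gromovProd o x (γ t) ≤ gromovProd o x (γ (⌈t⌉₊ : ℕ)) :=
          gpγ_mono hγ0 hray x ht0 (Nat.le_ceil t)
      _ ≤ Fg o γ x := le_Fg hγ0 hray x _
  rw [Real.dist_eq, abs_of_nonpos (by linarith)]
  linarith

lemma busemann_eq (x : X) : busemann γ x = dist x o - 2 * Fg o γ x := by
  have key : Tendsto (fun t : ℝ => dist (γ t) x - t) atTop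
      (nhds (dist x o - 2 * Fg o γ x)) := by
    have h1 : Tendsto (fun t : ℝ => dist x o - 2 * gromovProd o x (γ t)) atTop
        (nhds (dist x o - 2 * Fg o γ x)) :=
      (tendsto_const_nhds.sub ((Fg_tendsto_real hγ0 hray x).const_mul 2))
    apply h1.congr'
    filter_upwards [eventually_ge_atTop (0:ℝ)] with t ht
    rw [gromovProd, distγ hγ0 hray t ht, dist_comm (γ t) x]
    ring
  exact key.limUnder_eq

lemma gpBase_busemann (p q : X) :
    gpBase (busemann γ) p q = gromovProd o p q - Fg o γ p - Fg o γ q := by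
  rw [gpBase, busemann_eq hγ0 hray p, busemann_eq hγ0 hray q, gromovProd]
  ring

lemma convToInf_omega : ConvToInf o (fun i : ℕ => γ i) := by
  rw [ConvToInf, tendsto_atTop]
  intro R
  rw [eventually_atTop]
  refine ⟨(⌈max R 0⌉₊, ⌈max R 0⌉₊), fun p hp => ?_⟩
  rw [gpγγ hγ0 hray _ _ (Nat.cast_nonneg _) (Nat.cast_nonneg _), le_min_iff]
  have h1 : max R 0 ≤ (p.1 : ℝ) :=
    le_trans (Nat.le_ceil _) (by exact_mod_cast hp.1)
  have h2 : max R 0 ≤ (p.2 : ℝ) :=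
    le_trans (Nat.le_ceil _) (by exact_mod_cast hp.2)
  exact ⟨le_trans (le_max_left _ _) h1, le_trans (le_max_left _ _) h2⟩

end Gamma

section Bands
variable {X : Type*} [MetricSpace X] {δ : ℝ} {o : X} {γ : ℝ → X}

lemma not_seqEquiv_freq {u w : ℕ → X} (h : ¬ SeqEquiv o u w) :
    ∃ M : ℝ, ∃ᶠ i in atTop, gromovProd o (u i) (w i) < M := by
  rw [SeqEquiv, tendsto_atTop] at h
  push_neg at h
  obtain ⟨M, hM⟩ := h
  refine ⟨M, ?_⟩
  have := Filter.not_eventually.mp hM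
  exact this.mono fun i h => not_not.mp h

variable (hδ : 0 ≤ δ) (hyp : IsDeltaHyperbolic X δ)
include hδ hyp

/-- Band for Gromov products of a sequence with a fixed point. -/
lemma band_pt (x : X) {v v' : ℕ → X} (hv : ConvToInf o v) (hv' : SeqEquiv o v v')
    {ε : ℝ} (hε : 0 < ε) :
    ∀ᶠ i in atTop,
      liminf (fun i : ℕ => gromovProd o (v i) x) atTop - ε - δ ≤ gromovProd o (v' i) x ∧
      gromovProd o (v' i) x ≤ liminf (fun i : ℕ => gromovProd o (v i) x) atTop + ε + 2 * δ := by
  set β := liminf (fun i : ℕ => gromovProd o (v i) x) atTop with hβ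
  clear_value β
  have hbdd : IsBoundedUnder (· ≥ ·) (atTop : Filter ℕ) (fun i : ℕ => gromovProd o (v i) x) :=
    isBoundedUnder_of ⟨0, fun i : ℕ => gp_nonneg o (v i) x⟩
  have hub : IsBoundedUnder (· ≤ ·) (atTop : Filter ℕ) (fun i : ℕ => gromovProd o (v i) x) :=
    isBoundedUnder_of ⟨dist x o, fun i : ℕ => gp_le_right o (v i) x⟩
  have hev_lo : ∀ᶠ i in atTop, β - ε < gromovProd o (v i) x :=
    eventually_lt_of_lt_liminf (by linarith) hbdd
  -- step 1 : eventual upper bound for `v` itself, with ε/2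
  have hfreq : ∃ᶠ i in atTop, gromovProd o (v i) x < β + ε / 2 := by
    apply frequently_lt_of_liminf_lt (hub.isCoboundedUnder_ge)
    linarith
  obtain ⟨N₀, hN₀⟩ := convToInf_pairs hv (dist x o + 1)
  obtain ⟨k, hkN, hk⟩ := (frequently_atTop.mp hfreq) N₀
  have hvup : ∀ i ≥ N₀, gromovProd o (v i) x ≤ β + ε / 2 + δ := by
    intro i hi
    by_contra hcon
    push_neg at hcon
    have hr1 : β + ε / 2 + δ ≤ gromovProd o (v k) (v i) :=
      le_trans (le_trans (le_of_lt hcon) (gp_le_right o (v i) x)) (by linarith [hN₀ k hkN i hi])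
    have := hyp3 hyp hr1 (le_of_lt hcon)
    linarith
  -- step 2 : transfer to v'
  have hvv' : Tendsto (fun i => gromovProd o (v i) (v' i)) atTop atTop := hv'
  filter_upwards [hev_lo, eventually_atTop.mpr ⟨N₀, hvup⟩,
    tendsto_ev hvv' (β + ε + 2 * δ), tendsto_ev hvv' (β - ε)] with i h1 h2 h3 h4
  constructor
  · have h4' : β - ε ≤ gromovProd o (v' i) (v i) := by rwa [gp_comm o (v' i) (v i)]
    exact hyp3 hyp h4' (le_of_lt h1)
  · by_contra hcon
    push_neg at hcon
    have := hyp3 hyp h3 (le_of_lt hcon)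
    linarith

/-- Band for `Fg` along a sequence not equivalent to ω. -/
lemma band_F (hγ0 : γ 0 = o)
    (hray : ∀ s t : ℝ, 0 ≤ s → 0 ≤ t → dist (γ s) (γ t) = |s - t|)
    {v v' : ℕ → X} (hv : ConvToInf o v) (hv' : SeqEquiv o v v')
    (hvω : ¬ SeqEquiv o v (fun i : ℕ => γ i)) {ε : ℝ} (hε : 0 < ε) :
    ∀ᶠ i in atTop,
      liminf (fun i : ℕ => gromovProd o (v i) (γ i)) atTop - ε - δ ≤ Fg o γ (v' i) ∧
      Fg o γ (v' i) ≤ liminf (fun i : ℕ => gromovProd o (v i) (γ i)) atTop + ε + 3 * δ := by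
  set β := liminf (fun i : ℕ => gromovProd o (v i) (γ i)) atTop with hβ
  clear_value β
  obtain ⟨M, hM⟩ := not_seqEquiv_freq (o := o) hvω
  have hbdd : IsBoundedUnder (· ≥ ·) atTop (fun i : ℕ => gromovProd o (v i) (γ i)) :=
    isBoundedUnder_of ⟨0, fun i : ℕ => gp_nonneg o (v i) (γ i)⟩
  have hcob : IsCoboundedUnder (· ≥ ·) atTop (fun i : ℕ => gromovProd o (v i) (γ i)) :=
    IsCoboundedUnder.of_frequently_le (hM.mono fun i h => le_of_lt h)
  have hev_lo : ∀ᶠ i in atTop, β - ε < gromovProd o (v i) (γ i) :=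
    eventually_lt_of_lt_liminf (by linarith) hbdd
  have hfreq : ∃ᶠ i in atTop, gromovProd o (v i) (γ i) < β + ε / 2 :=
    frequently_lt_of_liminf_lt hcob (by linarith)
  -- step 1: uniform upper bound for v
  set c := β + ε / 2 + 2 * δ with hc
  clear_value c
  obtain ⟨N₀, hN₀⟩ := convToInf_pairs hv c
  obtain ⟨k, hkN, hk⟩ := (frequently_atTop.mp hfreq) (max N₀ ⌈max c 0⌉₊)
  have hkc : c ≤ (k : ℝ) :=
    le_trans (le_max_left c 0) (le_trans (Nat.le_ceil _)
      (by exact_mod_cast le_trans (le_max_right _ _) hkN))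
  have huniform : ∀ i ≥ N₀, ∀ j : ℕ, gromovProd o (v i) (γ j) ≤ c := by
    intro i hi j
    have hkey : gromovProd o (v i) (γ (k : ℕ)) ≤ c ∧ (∀ j ≥ k, gromovProd o (v i) (γ j) ≤ c) := by
      have hgen : ∀ j ≥ k, gromovProd o (v i) (γ j) ≤ c := by
        intro j hj
        by_contra hcon
        push_neg at hcon
        have hr1 : c ≤ gromovProd o (v k) (v i) := hN₀ k (le_trans (le_max_left _ _) hkN) i hi
        have hr3 : c ≤ gromovProd o (γ (j:ℕ)) (γ (k:ℕ)) := by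
          rw [gpγγ hγ0 hray _ _ (Nat.cast_nonneg _) (Nat.cast_nonneg _)]
          rw [le_min_iff]
          exact ⟨le_trans hkc (by exact_mod_cast hj), hkc⟩
        have := hyp4 hδ hyp hr1 (le_of_lt hcon) hr3
        linarith
      exact ⟨hgen k le_rfl, hgen⟩
    rcases le_or_gt (k : ℕ) j with h | h
    · exact hkey.2 j h
    · calc gromovProd o (v i) (γ j) ≤ gromovProd o (v i) (γ (k : ℕ)) :=
            gpγ_mono hγ0 hray (v i) (s := (j:ℝ)) (t := (k:ℝ)) (Nat.cast_nonneg _)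
              (Nat.cast_le.mpr h.le)
        _ ≤ c := hkey.1
  -- step 2: transfer to v'
  have hvv' : Tendsto (fun i => gromovProd o (v i) (v' i)) atTop atTop := hv'
  filter_upwards [hev_lo, eventually_atTop.mpr ⟨N₀, fun i hi => huniform i hi⟩,
    tendsto_ev hvv' (c + δ + ε / 2), tendsto_ev hvv' (β - ε)] with i h1 h2 h3 h4
  constructor
  · have h4' : β - ε ≤ gromovProd o (v' i) (v i) := by rwa [gp_comm o (v' i) (v i)]
    have := hyp3 hyp h4' (le_of_lt h1)
    calc β - ε - δ ≤ gromovProd o (v' i) (γ (i : ℕ)) := this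
      _ ≤ Fg o γ (v' i) := le_Fg hγ0 hray (v' i) i
  · have hFub : ∀ j : ℕ, gromovProd o (v' i) (γ j) ≤ c + δ + ε / 2 := by
      intro j
      by_contra hcon
      push_neg at hcon
      have := hyp3 hyp h3 (le_of_lt hcon)
      have h2j := h2 j
      linarith [hε]
    have : Fg o γ (v' i) ≤ c + δ + ε / 2 := by
      apply ciSup_le
      intro j
      exact hFub j
    linarith

/-- Band for Gromov products along two non-equivalent sequences. -/
lemma band_bd {u u' w w' : ℕ → X} (hu : ConvToInf o u) (hw : ConvToInf o w)
    (hu' : SeqEquiv o u u') (hw' : SeqEquiv o w w') (huw : ¬ SeqEquiv o u w)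
    {ε : ℝ} (hε : 0 < ε) :
    ∀ᶠ i in atTop,
      liminf (fun i : ℕ => gromovProd o (u i) (w i)) atTop - ε - 2 * δ ≤ gromovProd o (u' i) (w' i) ∧
      gromovProd o (u' i) (w' i) ≤ liminf (fun i : ℕ => gromovProd o (u i) (w i)) atTop + ε + 4 * δ := by
  set β := liminf (fun i : ℕ => gromovProd o (u i) (w i)) atTop with hβ
  clear_value β
  obtain ⟨M, hM⟩ := not_seqEquiv_freq (o := o) huw
  have hbdd : IsBoundedUnder (· ≥ ·) atTop (fun i : ℕ => gromovProd o (u i) (w i)) :=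
    isBoundedUnder_of ⟨0, fun i : ℕ => gp_nonneg o (u i) (w i)⟩
  have hcob : IsCoboundedUnder (· ≥ ·) atTop (fun i : ℕ => gromovProd o (u i) (w i)) :=
    IsCoboundedUnder.of_frequently_le (hM.mono fun i h => le_of_lt h)
  have hev_lo : ∀ᶠ i in atTop, β - ε < gromovProd o (u i) (w i) :=
    eventually_lt_of_lt_liminf (by linarith) hbdd
  have hfreq : ∃ᶠ i in atTop, gromovProd o (u i) (w i) < β + ε / 2 :=
    frequently_lt_of_liminf_lt hcob (by linarith)
  set c := β + ε / 2 + 2 * δ with hc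
  clear_value c
  obtain ⟨Nu, hNu⟩ := convToInf_pairs hu c
  obtain ⟨Nw, hNw⟩ := convToInf_pairs hw c
  obtain ⟨k, hkN, hk⟩ := (frequently_atTop.mp hfreq) (max Nu Nw)
  have hup : ∀ i ≥ max Nu Nw, gromovProd o (u i) (w i) ≤ c := by
    intro i hi
    by_contra hcon
    push_neg at hcon
    have hr1 : c ≤ gromovProd o (u k) (u i) :=
      hNu k (le_trans (le_max_left _ _) hkN) i (le_trans (le_max_left _ _) hi)
    have hr3 : c ≤ gromovProd o (w i) (w k) :=
      hNw i (le_trans (le_max_right _ _) hi) k (le_trans (le_max_right _ _) hkN)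
    have := hyp4 hδ hyp hr1 (le_of_lt hcon) hr3
    linarith
  have huu' : Tendsto (fun i => gromovProd o (u i) (u' i)) atTop atTop := hu'
  have hww' : Tendsto (fun i => gromovProd o (w i) (w' i)) atTop atTop := hw'
  filter_upwards [hev_lo, eventually_atTop.mpr ⟨max Nu Nw, hup⟩,
    tendsto_ev huu' (c + 2 * δ + ε / 2), tendsto_ev hww' (c + 2 * δ + ε / 2),
    tendsto_ev huu' (β - ε), tendsto_ev hww' (β - ε)] with i h1 h2 h3 h4 h5 h6
  constructor
  · have h5' : β - ε ≤ gromovProd o (u' i) (u i) := by rwa [gp_comm o (u' i) (u i)]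
    exact hyp4 hδ hyp h5' (le_of_lt h1) h6
  · by_contra hcon
    push_neg at hcon
    have h4' : c + 2 * δ + ε / 2 ≤ gromovProd o (w' i) (w i) := by
      rwa [gp_comm o (w' i) (w i)]
    have := hyp4 hδ hyp (le_trans (le_refl _) h3 : c + 2*δ + ε/2 ≤ gromovProd o (u i) (u' i))
      (le_trans (by linarith) (le_of_lt hcon)) (le_trans (le_refl _) h4')
    linarith

end Bands

lemma gpBase_c0 {X : Type*} [MetricSpace X] (o x y : X) :
    gpBase (fun p => dist p o) x y = gromovProd o x y := rfl

section Eval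
variable {X : Type*} [MetricSpace X] {δ : ℝ} {o : X} {γ : ℝ → X}
  (hδ : 0 ≤ δ) (hyp : IsDeltaHyperbolic X δ)
include hδ hyp

lemma bgpPt_c0_bounds (x : X) {v : ℕ → X} (hv : ConvToInf o v) :
    liminf (fun i : ℕ => gromovProd o (v i) x) atTop - δ ≤ bgpPt o (fun p => dist p o) v x ∧
    bgpPt o (fun p => dist p o) v x ≤ liminf (fun i : ℕ => gromovProd o (v i) x) atTop := by
  have hlow : ∀ r ∈ { r : ℝ | ∃ u' : ℕ → X, ConvToInf o u' ∧ SeqEquiv o v u' ∧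
      r = liminf (fun i => gpBase (fun p => dist p o) (u' i) x) atTop },
      liminf (fun i : ℕ => gromovProd o (v i) x) atTop - δ ≤ r := by
    rintro r ⟨u', hu', hequiv, rfl⟩
    simp only [gpBase_c0]
    apply le_of_forall_pos_le_add
    intro ε hε
    have hband := band_pt hδ hyp x hv hequiv hε
    have := liminf_band (hband.mono fun i h => h.1) (hband.mono fun i h => h.2)
    linarith [this.1]
  have hmem : liminf (fun i : ℕ => gromovProd o (v i) x) atTop ∈
      { r : ℝ | ∃ u' : ℕ → X, ConvToInf o u' ∧ SeqEquiv o v u' ∧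
        r = liminf (fun i => gpBase (fun p => dist p o) (u' i) x) atTop } :=
    ⟨v, hv, hv.selfEquiv, by simp only [gpBase_c0]⟩
  exact ⟨le_csInf ⟨_, hmem⟩ hlow, csInf_le ⟨_, hlow⟩ hmem⟩

lemma bgpBd_c0_bounds {u w : ℕ → X} (hu : ConvToInf o u) (hw : ConvToInf o w)
    (huw : ¬ SeqEquiv o u w) :
    liminf (fun i : ℕ => gromovProd o (u i) (w i)) atTop - 2 * δ ≤
      bgpBd o (fun p => dist p o) u w ∧
    bgpBd o (fun p => dist p o) u w ≤ liminf (fun i : ℕ => gromovProd o (u i) (w i)) atTop := by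
  have hlow : ∀ r ∈ { r : ℝ | ∃ u' v' : ℕ → X, ConvToInf o u' ∧ ConvToInf o v' ∧
      SeqEquiv o u u' ∧ SeqEquiv o w v' ∧
      r = liminf (fun i => gpBase (fun p => dist p o) (u' i) (v' i)) atTop },
      liminf (fun i : ℕ => gromovProd o (u i) (w i)) atTop - 2 * δ ≤ r := by
    rintro r ⟨u', w', hu', hw', hequ, heqw, rfl⟩
    simp only [gpBase_c0]
    apply le_of_forall_pos_le_add
    intro ε hε
    have hband := band_bd hδ hyp hu hw hequ heqw huw hε
    have := liminf_band (hband.mono fun i h => h.1) (hband.mono fun i h => h.2)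
    linarith [this.1]
  have hmem : liminf (fun i : ℕ => gromovProd o (u i) (w i)) atTop ∈
      { r : ℝ | ∃ u' v' : ℕ → X, ConvToInf o u' ∧ ConvToInf o v' ∧
        SeqEquiv o u u' ∧ SeqEquiv o w v' ∧
        r = liminf (fun i => gpBase (fun p => dist p o) (u' i) (v' i)) atTop } :=
    ⟨u, w, hu, hw, hu.selfEquiv, hw.selfEquiv, by simp only [gpBase_c0]⟩
  exact ⟨le_csInf ⟨_, hmem⟩ hlow, csInf_le ⟨_, hlow⟩ hmem⟩

lemma liminf_omega_pt (hγ0 : γ 0 = o)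
    (hray : ∀ s t : ℝ, 0 ≤ s → 0 ≤ t → dist (γ s) (γ t) = |s - t|) (x : X) :
    liminf (fun i : ℕ => gromovProd o (γ i) x) atTop = Fg o γ x := by
  have h : Tendsto (fun i : ℕ => gromovProd o (γ i) x) atTop (nhds (Fg o γ x)) :=
    (Fg_tendsto hγ0 hray x).congr (fun i : ℕ => gp_comm o x (γ i))
  exact h.liminf_eq

lemma bgpPt_b_bounds (hγ0 : γ 0 = o)
    (hray : ∀ s t : ℝ, 0 ≤ s → 0 ≤ t → dist (γ s) (γ t) = |s - t|)
    (x : X) {v : ℕ → X} (hv : ConvToInf o v)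
    (hvω : ¬ SeqEquiv o v (fun i : ℕ => γ i)) :
    liminf (fun i : ℕ => gromovProd o (v i) x) atTop
      - liminf (fun i : ℕ => gromovProd o (v i) (γ i)) atTop - Fg o γ x - 4 * δ ≤
      bgpPt o (busemann γ) v x ∧
    bgpPt o (busemann γ) v x ≤
      liminf (fun i : ℕ => gromovProd o (v i) x) atTop
      - liminf (fun i : ℕ => gromovProd o (v i) (γ i)) atTop - Fg o γ x + 3 * δ := by
  set T := liminf (fun i : ℕ => gromovProd o (v i) x) atTop
      - liminf (fun i : ℕ => gromovProd o (v i) (γ i)) atTop - Fg o γ x with hT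
  have hboth : ∀ r ∈ { r : ℝ | ∃ u' : ℕ → X, ConvToInf o u' ∧ SeqEquiv o v u' ∧
      r = liminf (fun i => gpBase (busemann γ) (u' i) x) atTop },
      T - 4 * δ ≤ r ∧ r ≤ T + 3 * δ := by
    rintro r ⟨u', hu', hequiv, rfl⟩
    have hrw : (fun i : ℕ => gpBase (busemann γ) (u' i) x) =
        fun i : ℕ => gromovProd o (u' i) x - Fg o γ (u' i) - Fg o γ x := by
      funext i; exact gpBase_busemann hγ0 hray (u' i) x
    rw [hrw]
    constructor
    · apply le_of_forall_pos_le_add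
      intro ε hε
      have hε2 : (0:ℝ) < ε / 2 := by linarith
      have hb1 := band_pt hδ hyp x hv hequiv hε2
      have hb2 := band_F hδ hyp hγ0 hray hv hequiv hvω hε2
      have hev1 : ∀ᶠ i in atTop,
          T - ε - 4 * δ ≤ gromovProd o (u' i) x - Fg o γ (u' i) - Fg o γ x := by
        filter_upwards [hb1, hb2] with i h1 h2
        rw [hT]; linarith [h1.1, h2.2]
      have hev2 : ∀ᶠ i in atTop,
          gromovProd o (u' i) x - Fg o γ (u' i) - Fg o γ x ≤ T + ε + 3 * δ := by
        filter_upwards [hb1, hb2] with i h1 h2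
        rw [hT]; linarith [h1.2, h2.1]
      have := liminf_band hev1 hev2
      linarith [this.1]
    · apply le_of_forall_pos_le_add
      intro ε hε
      have hε2 : (0:ℝ) < ε / 2 := by linarith
      have hb1 := band_pt hδ hyp x hv hequiv hε2
      have hb2 := band_F hδ hyp hγ0 hray hv hequiv hvω hε2
      have hev1 : ∀ᶠ i in atTop,
          T - ε - 4 * δ ≤ gromovProd o (u' i) x - Fg o γ (u' i) - Fg o γ x := by
        filter_upwards [hb1, hb2] with i h1 h2
        rw [hT]; linarith [h1.1, h2.2]
      have hev2 : ∀ᶠ i in atTop,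
          gromovProd o (u' i) x - Fg o γ (u' i) - Fg o γ x ≤ T + ε + 3 * δ := by
        filter_upwards [hb1, hb2] with i h1 h2
        rw [hT]; linarith [h1.2, h2.1]
      have := liminf_band hev1 hev2
      linarith [this.2]
  have hne : ∃ r, r ∈ { r : ℝ | ∃ u' : ℕ → X, ConvToInf o u' ∧ SeqEquiv o v u' ∧
      r = liminf (fun i => gpBase (busemann γ) (u' i) x) atTop } :=
    ⟨_, ⟨v, hv, hv.selfEquiv, rfl⟩⟩
  obtain ⟨r₀, hr₀⟩ := hne
  constructor
  · exact le_csInf ⟨r₀, hr₀⟩ fun r hr => (hboth r hr).1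
  · exact le_trans (csInf_le ⟨T - 4 * δ, fun r hr => (hboth r hr).1⟩ hr₀) (hboth r₀ hr₀).2

lemma bgpBd_b_bounds (hγ0 : γ 0 = o)
    (hray : ∀ s t : ℝ, 0 ≤ s → 0 ≤ t → dist (γ s) (γ t) = |s - t|)
    {u w : ℕ → X} (hu : ConvToInf o u) (hw : ConvToInf o w)
    (huω : ¬ SeqEquiv o u (fun i : ℕ => γ i)) (hwω : ¬ SeqEquiv o w (fun i : ℕ => γ i))
    (huw : ¬ SeqEquiv o u w) :
    liminf (fun i : ℕ => gromovProd o (u i) (w i)) atTop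
      - liminf (fun i : ℕ => gromovProd o (u i) (γ i)) atTop
      - liminf (fun i : ℕ => gromovProd o (w i) (γ i)) atTop - 8 * δ ≤
      bgpBd o (busemann γ) u w ∧
    bgpBd o (busemann γ) u w ≤
      liminf (fun i : ℕ => gromovProd o (u i) (w i)) atTop
      - liminf (fun i : ℕ => gromovProd o (u i) (γ i)) atTop
      - liminf (fun i : ℕ => gromovProd o (w i) (γ i)) atTop + 6 * δ := by
  set T := liminf (fun i : ℕ => gromovProd o (u i) (w i)) atTop
      - liminf (fun i : ℕ => gromovProd o (u i) (γ i)) atTop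
      - liminf (fun i : ℕ => gromovProd o (w i) (γ i)) atTop with hT
  have hboth : ∀ r ∈ { r : ℝ | ∃ u' v' : ℕ → X, ConvToInf o u' ∧ ConvToInf o v' ∧
      SeqEquiv o u u' ∧ SeqEquiv o w v' ∧
      r = liminf (fun i => gpBase (busemann γ) (u' i) (v' i)) atTop },
      T - 8 * δ ≤ r ∧ r ≤ T + 6 * δ := by
    rintro r ⟨u', w', hu', hw', hequ, heqw, rfl⟩
    have hrw : (fun i : ℕ => gpBase (busemann γ) (u' i) (w' i)) =
        fun i : ℕ => gromovProd o (u' i) (w' i) - Fg o γ (u' i) - Fg o γ (w' i) := by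
      funext i; exact gpBase_busemann hγ0 hray (u' i) (w' i)
    rw [hrw]
    have key : ∀ ε : ℝ, 0 < ε →
        (T - ε - 8 * δ ≤ liminf (fun i : ℕ =>
          gromovProd o (u' i) (w' i) - Fg o γ (u' i) - Fg o γ (w' i)) atTop ∧
        liminf (fun i : ℕ =>
          gromovProd o (u' i) (w' i) - Fg o γ (u' i) - Fg o γ (w' i)) atTop ≤ T + ε + 6 * δ) := by
      intro ε hε
      have hε3 : (0:ℝ) < ε / 3 := by linarith
      have hb1 := band_bd hδ hyp hu hw hequ heqw huw hε3
      have hb2 := band_F hδ hyp hγ0 hray hu hequ huω hε3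
      have hb3 := band_F hδ hyp hγ0 hray hw heqw hwω hε3
      have hev1 : ∀ᶠ i in atTop, T - ε - 8 * δ ≤
          gromovProd o (u' i) (w' i) - Fg o γ (u' i) - Fg o γ (w' i) := by
        filter_upwards [hb1, hb2, hb3] with i h1 h2 h3
        rw [hT]; linarith [h1.1, h2.2, h3.2]
      have hev2 : ∀ᶠ i in atTop,
          gromovProd o (u' i) (w' i) - Fg o γ (u' i) - Fg o γ (w' i) ≤ T + ε + 6 * δ := by
        filter_upwards [hb1, hb2, hb3] with i h1 h2 h3
        rw [hT]; linarith [h1.2, h2.1, h3.1]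
      exact liminf_band hev1 hev2
    constructor
    · apply le_of_forall_pos_le_add
      intro ε hε
      linarith [(key ε hε).1]
    · apply le_of_forall_pos_le_add
      intro ε hε
      linarith [(key ε hε).2]
  have hr₀mem : liminf (fun i => gpBase (busemann γ) (u i) (w i)) atTop ∈
      { r : ℝ | ∃ u' v' : ℕ → X, ConvToInf o u' ∧ ConvToInf o v' ∧
        SeqEquiv o u u' ∧ SeqEquiv o w v' ∧
        r = liminf (fun i => gpBase (busemann γ) (u' i) (v' i)) atTop } :=
    ⟨u, w, hu, hw, hu.selfEquiv, hw.selfEquiv, rfl⟩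
  constructor
  · exact le_csInf ⟨_, hr₀mem⟩ fun r hr => (hboth r hr).1
  · exact le_trans (csInf_le ⟨T - 8 * δ, fun r hr => (hboth r hr).1⟩ hr₀mem)
      (hboth _ hr₀mem).2

end Eval

lemma keyP {X : Type*} [MetricSpace X] {δ : ℝ} {o : X} {γ : ℝ → X}
    (hδ : 0 ≤ δ) (hyp : IsDeltaHyperbolic X δ) (hγ0 : γ 0 = o)
    (hray : ∀ s t : ℝ, 0 ≤ s → 0 ≤ t → dist (γ s) (γ t) = |s - t|)
    (a b : X ⊕ (ℕ → X)) (ha : ValidElem o γ a) (hb : ValidElem o γ b)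
    (hab : DistinctElem o a b) :
    |gpMixed o (busemann γ) a b - gpMixed o (fun p => dist p o) a b
      + gpMixed o (fun p => dist p o) a (Sum.inr (fun i : ℕ => γ i))
      + gpMixed o (fun p => dist p o) b (Sum.inr (fun i : ℕ => γ i))| ≤ 14 * δ := by
  have hω := convToInf_omega hγ0 hray
  rcases a with x | u <;> rcases b with y | v
  · -- point, point
    simp only [gpMixed]
    have hx := bgpPt_c0_bounds hδ hyp x hω
    have hy := bgpPt_c0_bounds hδ hyp y hω
    rw [liminf_omega_pt hδ hyp hγ0 hray x] at hx
    rw [liminf_omega_pt hδ hyp hγ0 hray y] at hy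
    rw [gpBase_busemann hγ0 hray x y, gpBase_c0]
    rw [abs_le]
    constructor <;> [linarith [hx.1, hy.1]; linarith [hx.2, hy.2]]
  · -- point, boundary
    obtain ⟨hv, hvω⟩ := hb
    simp only [gpMixed]
    have h1 := bgpPt_b_bounds hδ hyp hγ0 hray x hv hvω
    have h2 := bgpPt_c0_bounds hδ hyp x hv
    have h3 := bgpPt_c0_bounds hδ hyp x hω
    rw [liminf_omega_pt hδ hyp hγ0 hray x] at h3
    have h4 := bgpBd_c0_bounds hδ hyp hv hω hvω
    rw [abs_le]
    constructor <;>
      [linarith [h1.1, h2.2, h3.1, h4.1]; linarith [h1.2, h2.1, h3.2, h4.2]]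
  · -- boundary, point
    obtain ⟨hu, huω⟩ := ha
    simp only [gpMixed]
    have h1 := bgpPt_b_bounds hδ hyp hγ0 hray y hu huω
    have h2 := bgpPt_c0_bounds hδ hyp y hu
    have h3 := bgpPt_c0_bounds hδ hyp y hω
    rw [liminf_omega_pt hδ hyp hγ0 hray y] at h3
    have h4 := bgpBd_c0_bounds hδ hyp hu hω huω
    rw [abs_le]
    constructor <;>
      [linarith [h1.1, h2.2, h3.1, h4.1]; linarith [h1.2, h2.1, h3.2, h4.2]]
  · -- boundary, boundary
    obtain ⟨hu, huω⟩ := ha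
    obtain ⟨hv, hvω⟩ := hb
    have huv : ¬ SeqEquiv o u v := hab
    simp only [gpMixed]
    have h1 := bgpBd_b_bounds hδ hyp hγ0 hray hu hv huω hvω huv
    have h2 := bgpBd_c0_bounds hδ hyp hu hv huv
    have h3 := bgpBd_c0_bounds hδ hyp hu hω huω
    have h4 := bgpBd_c0_bounds hδ hyp hv hω hvω
    rw [abs_le]
    constructor <;>
      [linarith [h1.1, h2.2, h3.1, h4.1]; linarith [h1.2, h2.1, h3.2, h4.2]]

theorem busemann_product_difference_vs_cross_difference
    {X : Type*} [MetricSpace X] (δ : ℝ) (hδ : 0 ≤ δ)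
    (hXhyp : IsDeltaHyperbolic X δ) (hXgeo : IsGeodesicSpace X)
    (o : X) (γ : ℝ → X) (hγ0 : γ 0 = o)
    (hray : ∀ s t : ℝ, 0 ≤ s → 0 ≤ t → dist (γ s) (γ t) = |s - t|) :
    ∃ C₂ : ℝ, 0 ≤ C₂ ∧
      ∀ x y z : X ⊕ (ℕ → X),
        ValidElem o γ x → ValidElem o γ y → ValidElem o γ z →
        DistinctElem o x y → DistinctElem o x z → DistinctElem o y z →
        |gpMixed o (busemann γ) x y - gpMixed o (busemann γ) x z -
          (gpMixed o (fun p => dist p o) x y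
            + gpMixed o (fun p => dist p o) z (Sum.inr (fun i : ℕ => γ i))
            - gpMixed o (fun p => dist p o) x z
            - gpMixed o (fun p => dist p o) y (Sum.inr (fun i : ℕ => γ i)))| ≤ C₂ := by
  refine ⟨28 * δ, by linarith, fun x y z hx hy hz hxy hxz hyz => ?_⟩
  have P1 := keyP hδ hXhyp hγ0 hray x y hx hy hxy
  have P2 := keyP hδ hXhyp hγ0 hray x z hx hz hxz
  rw [abs_le] at P1 P2 ⊢
  constructor <;> [linarith [P1.1, P2.2]; linarith [P1.2, P2.1]]
end
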